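/- arXiv:1301.5703 — 3 statements merged into one kernel-verified Lean document; each statement's English description precedes it below -/
import Mathlib

section
/- Fix an integer h ≥ 2, a real constant c > 0, and a real δ with (h−1)/h < δ < 1. Fix two pairs of integers (s_1, d_1) and (s_2, d_2) with s_i ≥ d_i ≥ 0, s_i + d_i = h, and d_1 > d_2. For each N let A be a random subset of I_N in the binomial model with parameter p(N) = c·N^{−δ}. Then for every ε > 0, the probability that | |A_{s_1,d_1}| / |A_{s_2,d_2}| − (s_2!·d_2!)/(s_1!·d_1!) | > ε tends to 0 as N → ∞. In particular, since s_2!·d_2! > s_1!·d_1!, the probability that |A_{s_1,d_1}| > |A_{s_2,d_2}| tends to 1 as N → ∞. -/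
open Finset Filter

open Classical in
/-- Probability, under the binomial model on subsets of `I_N = {0, …, N}` with
parameter `p` (each element of `I_N` lies in `A` independently with probability `p`),
of the event `E`. -/
noncomputable def binomialProb (N : ℕ) (p : ℝ) (E : Finset ℕ → Prop) : ℝ :=
  ∑ A ∈ (Finset.range (N + 1)).powerset,
    if E A then p ^ A.card * (1 - p) ^ (N + 1 - A.card) else 0

/-- The generalized sumset `A_{s,d} = {a₁ + ⋯ + a_s - a_{s+1} - ⋯ - a_{s+d} : aᵢ ∈ A}`. -/
def genSumset (s d : ℕ) (A : Finset ℤ) : Finset ℤ :=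
  (Fintype.piFinset fun _ : Fin (s + d) => A).image fun a =>
    ∑ i : Fin (s + d), if (i : ℕ) < s then a i else -a i

/-!
Call `w₁ + ⋯ + w_s - w_{s+1} - ⋯ - w_h` the signed sum of a tuple `w ∈ A^h`, so that `A_{s,d}`
is the image of the signed-sum map. Injective tuples with the same multisets of positive and of
negative entries form classes of exactly `s! d!` tuples with a common signed sum. Hence
`s! d! |A_{s,d}|` equals `|A|^h` up to the `O(h² |A|^(h-1))` non-injective tuples and the number of
bad pairs: injective tuples with equal signed sums but in different classes. The entries of a bad
pair satisfy a linear relation that stays nontrivial after collecting equal entries, so one of its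
`j` distinct values is determined by the others, and the expected number of bad pairs is
`O(∑_{j ≤ 2h} N^(j-1) p^j) = O(K^(2h) / N)` with `K = (N+1) p`. For `p = c N^(-δ)` with
`(h-1)/h < δ < 1` we have `K → ∞` and `K^h / N → 0`, while `|A| / K → 1` by Chebyshev. Therefore
`s! d! |A_{s,d}| / K^h → 1` in probability for each `(s, d)`, and the ratio of two such sumsets
tends to `s₂! d₂! / (s₁! d₁!)`, which exceeds `1` because `d₁ > d₂`.
-/

open Topology

section BinomialModel

variable {N : ℕ} {p : ℝ}

noncomputable def binomialWeight (N : ℕ) (p : ℝ) (A : Finset ℕ) : ℝ :=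
  p ^ #A * (1 - p) ^ (N + 1 - #A)

noncomputable def binomialExp (N : ℕ) (p : ℝ) (X : Finset ℕ → ℝ) : ℝ :=
  ∑ A ∈ (range (N + 1)).powerset, binomialWeight N p A * X A

lemma binomialWeight_nonneg (hp₀ : 0 ≤ p) (hp₁ : p ≤ 1) (A : Finset ℕ) :
    0 ≤ binomialWeight N p A :=
  mul_nonneg (pow_nonneg hp₀ _) (pow_nonneg (sub_nonneg.2 hp₁) _)

lemma binomialExp_congr {X Y : Finset ℕ → ℝ} (h : ∀ A ⊆ range (N + 1), X A = Y A) :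
    binomialExp N p X = binomialExp N p Y :=
  sum_congr rfl fun A hA => by rw [h A (mem_powerset.1 hA)]

/-- Expanding `∏ i ∈ I_N, (p + [i ∉ B] (1 - p))` over subsets of `I_N`. -/
lemma sum_binomialWeight_of_subset {B : Finset ℕ} (hB : B ⊆ range (N + 1)) :
    ∑ A ∈ (range (N + 1)).powerset, (if B ⊆ A then binomialWeight N p A else 0) = p ^ #B := by
  classical
  have hprod := prod_add (fun _ => p) (fun i => if i ∈ B then 0 else 1 - p) (range (N + 1))
  have hlhs : ∏ i ∈ range (N + 1), (p + if i ∈ B then 0 else 1 - p) = p ^ #B :=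
    calc ∏ i ∈ range (N + 1), (p + if i ∈ B then 0 else 1 - p)
        = ∏ i ∈ range (N + 1), if i ∈ B then p else 1 :=
          prod_congr rfl fun i _ => by split_ifs <;> ring
      _ = p ^ #B := by rw [prod_ite_mem, inter_eq_right.2 hB, prod_const]
  rw [← hlhs, hprod]
  refine sum_congr rfl fun A hA => ?_
  rw [prod_const]
  split_ifs with hBA
  · rw [binomialWeight, prod_congr rfl fun i hi => if_neg fun hiB => (mem_sdiff.1 hi).2 (hBA hiB),
      prod_const, card_sdiff_of_subset (mem_powerset.1 hA), card_range]
  · obtain ⟨i, hiB, hiA⟩ := not_subset.1 hBA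
    have hzero : ∏ j ∈ range (N + 1) \ A, (if j ∈ B then 0 else 1 - p) = 0 :=
      prod_eq_zero (mem_sdiff.2 ⟨hB hiB, hiA⟩) (if_pos hiB)
    rw [hzero, mul_zero]

lemma binomialExp_div_const (X : Finset ℕ → ℝ) (c : ℝ) :
    binomialExp N p (fun A => X A / c) = binomialExp N p X / c := by
  simp only [binomialExp, sum_div, mul_div_assoc]

lemma binomialExp_one : binomialExp N p (fun _ => 1) = 1 := by
  simpa [binomialExp] using sum_binomialWeight_of_subset (N := N) (p := p) (empty_subset _)

lemma binomialExp_card_filter_subset_map {ι β : Type*} [DecidableEq β] (e : ℕ ↪ β)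
    (X : Finset ι) (S : ι → Finset β) (hS : ∀ x ∈ X, S x ⊆ (range (N + 1)).map e) :
    binomialExp N p (fun A => (#{x ∈ X | S x ⊆ A.map e} : ℝ)) = ∑ x ∈ X, p ^ #(S x) := by
  simp only [binomialExp, card_filter, Nat.cast_sum, mul_sum]
  rw [sum_comm]
  refine sum_congr rfl fun x hx => ?_
  obtain ⟨T, hT, hST⟩ := subset_map_iff.1 (hS x hx)
  rw [hST, card_map, ← sum_binomialWeight_of_subset hT]
  refine sum_congr rfl fun A _ => ?_
  simp only [map_subset_map]
  split_ifs <;> simp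

lemma binomialExp_card : binomialExp N p (fun A => (#A : ℝ)) = (N + 1) * p := by
  have h := binomialExp_card_filter_subset_map (N := N) (p := p) (Function.Embedding.refl ℕ)
    (range (N + 1)) (fun i => {i}) (by simp)
  rw [binomialExp_congr (Y := fun A => (#A : ℝ)) fun A hA => ?_] at h
  · simpa using h
  · simp [filter_mem_eq_inter, inter_eq_right.2 hA]

lemma binomialExp_card_sq :
    binomialExp N p (fun A => (#A : ℝ) ^ 2) = (N + 1) * (p + N * p ^ 2) := by
  have h := binomialExp_card_filter_subset_map (N := N) (p := p) (Function.Embedding.refl ℕ)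
    (range (N + 1) ×ˢ range (N + 1)) (fun q => {q.1, q.2})
    (fun q hq => by simpa [insert_subset_iff] using mem_product.1 hq)
  rw [binomialExp_congr (Y := fun A => (#A : ℝ) ^ 2) fun A hA => ?_] at h
  · have hrow : ∀ i ∈ range (N + 1), ∑ j ∈ range (N + 1), p ^ #{i, j} = p + N * p ^ 2 := by
      intro i hi
      rw [← sum_erase_add _ _ hi, insert_eq_of_mem (mem_singleton_self i), card_singleton,
        pow_one, add_comm, sum_congr rfl fun j hj => by rw [card_pair (ne_of_mem_erase hj).symm],
        sum_const, card_erase_of_mem hi, card_range, nsmul_eq_mul, add_tsub_cancel_right]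
    rw [h, sum_product, sum_congr rfl hrow, sum_const, card_range, nsmul_eq_mul]
    push_cast
    ring
  · have hfilter :
        {q ∈ range (N + 1) ×ˢ range (N + 1) | {q.1, q.2} ⊆ map (.refl ℕ) A} = A ×ˢ A := by
      ext q
      simp only [mem_filter, mem_product, map_refl, insert_subset_iff, singleton_subset_iff]
      exact ⟨fun h => h.2, fun h => ⟨⟨hA h.1, hA h.2⟩, h⟩⟩
    rw [hfilter, card_product, Nat.cast_mul, sq]

lemma binomialExp_card_sub_sq :
    binomialExp N p (fun A => ((#A : ℝ) - (N + 1) * p) ^ 2) = (N + 1) * p * (1 - p) := by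
  have h₀ := binomialExp_one (N := N) (p := p)
  have h₁ := binomialExp_card (N := N) (p := p)
  have h₂ := binomialExp_card_sq (N := N) (p := p)
  simp only [binomialExp] at h₀ h₁ h₂ ⊢
  have hexpand : ∀ A, binomialWeight N p A * ((#A : ℝ) - (N + 1) * p) ^ 2 =
      binomialWeight N p A * (#A : ℝ) ^ 2 - 2 * ((N + 1) * p) * (binomialWeight N p A * #A) +
        ((N + 1) * p) ^ 2 * (binomialWeight N p A * 1) := fun A => by ring
  simp only [hexpand, sum_add_distrib, sum_sub_distrib, ← mul_sum, h₀, h₁, h₂]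
  ring

lemma binomialProb_nonneg (hp₀ : 0 ≤ p) (hp₁ : p ≤ 1) (E : Finset ℕ → Prop) :
    0 ≤ binomialProb N p E :=
  sum_nonneg fun A _ => by
    split_ifs
    exacts [binomialWeight_nonneg hp₀ hp₁ A, le_rfl]

lemma binomialProb_mono (hp₀ : 0 ≤ p) (hp₁ : p ≤ 1) {E F : Finset ℕ → Prop}
    (hEF : ∀ A, E A → F A) : binomialProb N p E ≤ binomialProb N p F :=
  sum_le_sum fun A _ => by
    by_cases hE : E A
    · simp [hE, hEF A hE]
    · have hw : 0 ≤ p ^ #A * (1 - p) ^ (N + 1 - #A) := binomialWeight_nonneg hp₀ hp₁ A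
      by_cases hF : F A <;> simp [hE, hF, hw]

lemma binomialProb_or_le (hp₀ : 0 ≤ p) (hp₁ : p ≤ 1) (E F : Finset ℕ → Prop) :
    binomialProb N p (fun A => E A ∨ F A) ≤ binomialProb N p E + binomialProb N p F := by
  rw [binomialProb, binomialProb, binomialProb, ← sum_add_distrib]
  refine sum_le_sum fun A _ => ?_
  have hw : 0 ≤ p ^ #A * (1 - p) ^ (N + 1 - #A) := binomialWeight_nonneg hp₀ hp₁ A
  by_cases hE : E A <;> by_cases hF : F A <;> simp [hE, hF, hw]

lemma binomialProb_add_binomialProb_not (E : Finset ℕ → Prop) :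
    binomialProb N p E + binomialProb N p (fun A => ¬ E A) = 1 := by
  rw [← binomialExp_one (N := N) (p := p), binomialProb, binomialProb, ← sum_add_distrib]
  refine sum_congr rfl fun A _ => ?_
  by_cases hE : E A <;> simp [hE, binomialWeight]

lemma binomialProb_lt_le (hp₀ : 0 ≤ p) (hp₁ : p ≤ 1) {X : Finset ℕ → ℝ}
    (hX : ∀ A, 0 ≤ X A) {t : ℝ} (ht : 0 < t) :
    binomialProb N p (fun A => t < X A) ≤ binomialExp N p X / t := by
  rw [le_div_iff₀ ht, binomialProb, binomialExp, sum_mul]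
  refine sum_le_sum fun A _ => ?_
  have hw := binomialWeight_nonneg (N := N) hp₀ hp₁ A
  split_ifs with hA
  · exact mul_le_mul_of_nonneg_left hA.le hw
  · rw [zero_mul]
    exact mul_nonneg hw (hX A)

end BinomialModel

section ConvergenceInProbability

def TendstoInProb (p : ℕ → ℝ) (X : ℕ → Finset ℕ → ℝ) (a : ℝ) : Prop :=
  ∀ ε > 0, Tendsto (fun N => binomialProb N (p N) fun A => ε < |X N A - a|) atTop (𝓝 0)

variable {p : ℕ → ℝ} {X Y Z : ℕ → Finset ℕ → ℝ} {a b : ℝ}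

lemma tendsto_binomialProb_of_imp_or (hp : ∀ᶠ N in atTop, 0 ≤ p N ∧ p N ≤ 1)
    {E F G : ℕ → Finset ℕ → Prop}
    (hEFG : ∀ᶠ N in atTop, ∀ A, E N A → F N A ∨ G N A)
    (hF : Tendsto (fun N => binomialProb N (p N) (F N)) atTop (𝓝 0))
    (hG : Tendsto (fun N => binomialProb N (p N) (G N)) atTop (𝓝 0)) :
    Tendsto (fun N => binomialProb N (p N) (E N)) atTop (𝓝 0) := by
  refine squeeze_zero' ?_ ?_ (by simpa using hF.add hG)
  · filter_upwards [hp] with N hN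
    exact binomialProb_nonneg hN.1 hN.2 _
  · filter_upwards [hp, hEFG] with N hN hEFGN
    exact (binomialProb_mono hN.1 hN.2 hEFGN).trans (binomialProb_or_le hN.1 hN.2 _ _)

lemma tendstoInProb_of_tendsto {u : ℕ → ℝ} (hu : Tendsto u atTop (𝓝 a)) :
    TendstoInProb p (fun N _ => u N) a := by
  intro ε hε
  refine tendsto_const_nhds.congr' ?_
  filter_upwards [Metric.tendsto_nhds.1 hu ε hε] with N hN
  rw [Real.dist_eq] at hN
  simp [binomialProb, not_lt.2 hN.le]

lemma TendstoInProb.congr' (hXY : ∀ᶠ N in atTop, ∀ A, X N A = Y N A)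
    (hX : TendstoInProb p X a) : TendstoInProb p Y a := by
  intro ε hε
  refine (hX ε hε).congr' ?_
  filter_upwards [hXY] with N hN
  simp only [hN]

lemma TendstoInProb.comp₂ (hp : ∀ᶠ N in atTop, 0 ≤ p N ∧ p N ≤ 1)
    (hX : TendstoInProb p X a) (hY : TendstoInProb p Y b) {φ : ℝ → ℝ → ℝ}
    (hφ : ContinuousAt (Function.uncurry φ) (a, b)) :
    TendstoInProb p (fun N A => φ (X N A) (Y N A)) (φ a b) := by
  intro ε hε
  obtain ⟨η, hη, hφη⟩ := Metric.continuousAt_iff.1 hφ ε hε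
  refine tendsto_binomialProb_of_imp_or hp (Eventually.of_forall fun N A hA => ?_)
    (hX (η / 2) (by positivity)) (hY (η / 2) (by positivity))
  by_contra! h
  have hdist : dist (X N A, Y N A) (a, b) < η := by
    rw [Prod.dist_eq, Real.dist_eq, Real.dist_eq]
    exact max_lt (by linarith [h.1]) (by linarith [h.2])
  have := hφη hdist
  rw [Real.dist_eq] at this
  exact hA.not_gt this

lemma TendstoInProb.comp (hp : ∀ᶠ N in atTop, 0 ≤ p N ∧ p N ≤ 1)
    (hX : TendstoInProb p X a) {φ : ℝ → ℝ} (hφ : ContinuousAt φ a) :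
    TendstoInProb p (fun N A => φ (X N A)) (φ a) :=
  hX.comp₂ hp hX (φ := fun x _ => φ x) (hφ.comp continuousAt_fst)

lemma TendstoInProb.of_abs_sub_le (hp : ∀ᶠ N in atTop, 0 ≤ p N ∧ p N ≤ 1)
    (hZ : TendstoInProb p Z a) (hY : TendstoInProb p Y 0)
    (hXZ : ∀ᶠ N in atTop, ∀ A, |X N A - Z N A| ≤ Y N A) : TendstoInProb p X a := by
  intro ε hε
  refine tendsto_binomialProb_of_imp_or hp ?_ (hZ (ε / 2) (by positivity))
    (hY (ε / 2) (by positivity))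
  filter_upwards [hXZ] with N hN A hA
  by_contra! h
  rw [sub_zero] at h
  linarith [abs_sub_le (X N A) (Z N A) a, le_abs_self (Y N A), hN A]

lemma tendsto_binomialProb_lt_of_binomialExp (hp : ∀ᶠ N in atTop, 0 ≤ p N ∧ p N ≤ 1)
    (hY : ∀ᶠ N in atTop, ∀ A, 0 ≤ Y N A)
    (hEY : Tendsto (fun N => binomialExp N (p N) (Y N)) atTop (𝓝 0)) {t : ℝ} (ht : 0 < t) :
    Tendsto (fun N => binomialProb N (p N) fun A => t < Y N A) atTop (𝓝 0) := by
  refine squeeze_zero' ?_ ?_ (by simpa using hEY.div_const t)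
  · filter_upwards [hp] with N hN
    exact binomialProb_nonneg hN.1 hN.2 _
  · filter_upwards [hp, hY] with N hN hYN
    exact binomialProb_lt_le hN.1 hN.2 hYN ht

lemma tendstoInProb_zero_of_binomialExp (hp : ∀ᶠ N in atTop, 0 ≤ p N ∧ p N ≤ 1)
    (hY : ∀ᶠ N in atTop, ∀ A, 0 ≤ Y N A)
    (hEY : Tendsto (fun N => binomialExp N (p N) (Y N)) atTop (𝓝 0)) :
    TendstoInProb p Y 0 := by
  intro ε hε
  refine (tendsto_binomialProb_lt_of_binomialExp hp hY hEY hε).congr' ?_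
  filter_upwards [hY] with N hN
  simp only [sub_zero, abs_of_nonneg (hN _)]

lemma tendstoInProb_of_binomialExp_sq (hp : ∀ᶠ N in atTop, 0 ≤ p N ∧ p N ≤ 1)
    (hX : Tendsto (fun N => binomialExp N (p N) fun A => (X N A - a) ^ 2) atTop (𝓝 0)) :
    TendstoInProb p X a := by
  intro ε hε
  have hsq := tendsto_binomialProb_lt_of_binomialExp hp
    (Eventually.of_forall fun _ _ => sq_nonneg _) hX (pow_pos hε 2)
  refine tendsto_binomialProb_of_imp_or hp (Eventually.of_forall fun N A hA => ?_) hsq hsq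
  exact Or.inl (by simpa only [sq_abs] using pow_lt_pow_left₀ hA hε.le two_ne_zero)

lemma TendstoInProb.tendsto_binomialProb (hp : ∀ᶠ N in atTop, 0 ≤ p N ∧ p N ≤ 1)
    (hX : TendstoInProb p X a) (hb : b < a) {E : ℕ → Finset ℕ → Prop}
    (hE : ∀ N A, b < X N A → E N A) :
    Tendsto (fun N => binomialProb N (p N) (E N)) atTop (𝓝 1) := by
  have hnot : Tendsto (fun N => binomialProb N (p N) fun A => ¬ E N A) atTop (𝓝 0) := by
    have hdev := hX ((a - b) / 2) (by linarith)
    refine tendsto_binomialProb_of_imp_or hp (Eventually.of_forall fun N A hA => ?_) hdev hdev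
    have := not_lt.1 (mt (hE N A) hA)
    exact Or.inl (by rw [abs_sub_comm]; linarith [le_abs_self (a - X N A)])
  have hcompl : ∀ N, 1 - binomialProb N (p N) (fun A => ¬ E N A) = binomialProb N (p N) (E N) :=
    fun N => by linarith [binomialProb_add_binomialProb_not (N := N) (p := p N) (E N)]
  simpa using (hnot.const_sub 1).congr hcompl

lemma TendstoInProb.div_of_mul_div (hp : ∀ᶠ N in atTop, 0 ≤ p N ∧ p N ≤ 1)
    {K : ℕ → ℝ} {F₁ F₂ : ℝ} (hF₁ : 0 < F₁) (hF₂ : 0 < F₂)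
    (hK : ∀ᶠ N in atTop, K N ≠ 0)
    (hX : TendstoInProb p (fun N A => F₁ * X N A / K N) 1)
    (hY : TendstoInProb p (fun N A => F₂ * Y N A / K N) 1) :
    TendstoInProb p (fun N A => X N A / Y N A) (F₂ / F₁) := by
  have hXY := hX.comp₂ hp hY (φ := fun x y => F₂ / F₁ * x / y)
    ((continuousAt_const.mul continuousAt_fst).div continuousAt_snd one_ne_zero)
  simp only [mul_one, div_one] at hXY
  refine hXY.congr' ?_
  filter_upwards [hK] with N hKN A
  rw [mul_div_assoc, div_div_div_cancel_right₀ hKN, mul_div_mul_comm, ← mul_assoc,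
    div_mul_div_comm, mul_comm F₂, div_self (by positivity), one_mul]

end ConvergenceInProbability

section TupleCounting

lemma injective_iff_nodup_map_univ {α I : Type*} [Fintype I] (u : I → α) :
    Function.Injective u ↔ (univ.val.map u).Nodup := by
  rw [Multiset.nodup_map_iff_inj_on univ.nodup]
  simp [Function.Injective]

lemma map_univ_eq_iff {α I : Type*} [Fintype I] {M : Multiset α} (hM : M.Nodup)
    (hcard : Multiset.card M = Fintype.card I) (u : I → α) :
    univ.val.map u = M ↔ Function.Injective u ∧ ∀ i, u i ∈ M := by
  rw [injective_iff_nodup_map_univ]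
  constructor
  · rintro rfl
    exact ⟨hM, fun i => Multiset.mem_map_of_mem u (mem_univ i)⟩
  · rintro ⟨hu, huM⟩
    refine Multiset.eq_of_le_of_card_le ((Multiset.le_iff_subset hu).2 fun y hy => ?_)
      (by simp [hcard])
    obtain ⟨i, -, rfl⟩ := Multiset.mem_map.1 hy
    exact huM i

lemma count_map_univ {α I : Type*} [DecidableEq α] [Fintype I] (u : I → α) (y : α) :
    (univ.val.map u).count y = #{i | u i = y} := by
  rw [Multiset.count_map]
  simp_rw [eq_comm (a := y)]
  rfl

variable {α I : Type*} [DecidableEq α] [Fintype I] [DecidableEq I]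

lemma card_filter_apply_eq_le (A : Finset α) {i j : I} (hij : i ≠ j) :
    #{w ∈ Fintype.piFinset (fun _ : I => A) | w i = w j} ≤ #A ^ (Fintype.card I - 1) := by
  have hcard :
      #(Fintype.piFinset fun _ : {q : I // q ≠ j} => A) = #A ^ (Fintype.card I - 1) := by
    simp [Fintype.card_subtype_compl]
  rw [← hcard]
  refine card_le_card_of_injOn (fun w q => w q) (fun w hw => ?_) fun w hw w' hw' hww' => ?_
  · rw [mem_coe, mem_filter, Fintype.mem_piFinset] at hw
    simpa using fun q _ => hw.1 q
  · rw [mem_coe, mem_filter] at hw hw'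
    have hoff : ∀ q, q ≠ j → w q = w' q := fun q hq => congrFun hww' ⟨q, hq⟩
    funext q
    by_cases hq : q = j
    · rw [hq, ← hw.2, ← hw'.2, hoff i hij]
    · exact hoff q hq

lemma card_filter_not_injective_le (A : Finset α) :
    #{w ∈ Fintype.piFinset (fun _ : I => A) | ¬ Function.Injective w} ≤
      Fintype.card I ^ 2 * #A ^ (Fintype.card I - 1) := by
  have hcover : {w ∈ Fintype.piFinset (fun _ : I => A) | ¬ Function.Injective w} ⊆
      (univ : Finset I).offDiag.biUnion fun ij =>
        {w ∈ Fintype.piFinset (fun _ : I => A) | w ij.1 = w ij.2} := by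
    intro w hw
    obtain ⟨hwA, hw⟩ := mem_filter.1 hw
    obtain ⟨i, j, hij, hne⟩ := Function.not_injective_iff.1 hw
    exact mem_biUnion.2 ⟨(i, j), by simpa using hne, mem_filter.2 ⟨hwA, hij⟩⟩
  refine (card_le_card hcover).trans (card_biUnion_le.trans ?_)
  refine (sum_le_sum fun ij hij => card_filter_apply_eq_le A (mem_offDiag.1 hij).2.2).trans ?_
  rw [sum_const, smul_eq_mul, sq]
  gcongr
  rw [offDiag_card, card_univ]
  exact Nat.sub_le _ _

lemma card_filter_injective (B : Finset α) :
    #{u ∈ Fintype.piFinset (fun _ : I => B) | Function.Injective u} =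
      (#B).descFactorial (Fintype.card I) := by
  rw [← Fintype.card_coe B, ← Fintype.card_embedding_eq, ← card_univ]
  refine card_bij' (fun u hu => ⟨fun i => ⟨u i, Fintype.mem_piFinset.1 (mem_filter.1 hu).1 i⟩,
      fun i j hij => (mem_filter.1 hu).2 (congrArg Subtype.val hij)⟩)
    (fun e _ => fun i => e i) (fun _ _ => mem_univ _) (fun e _ => ?_) (fun _ _ => rfl)
    (fun _ _ => rfl)
  exact mem_filter.2 ⟨Fintype.mem_piFinset.2 fun i => (e i).2,
    fun i j hij => e.injective (Subtype.ext hij)⟩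

lemma card_filter_map_univ_eq (A : Finset α) {M : Multiset α} (hM : M.Nodup)
    (hcard : Multiset.card M = Fintype.card I) (hMA : ∀ y ∈ M, y ∈ A) :
    #{u ∈ Fintype.piFinset (fun _ : I => A) | univ.val.map u = M} =
      (Fintype.card I).factorial := by
  have hfilter : {u ∈ Fintype.piFinset (fun _ : I => A) | univ.val.map u = M} =
      {u ∈ Fintype.piFinset (fun _ : I => M.toFinset) | Function.Injective u} := by
    ext u
    simp only [mem_filter, Fintype.mem_piFinset, map_univ_eq_iff hM hcard, Multiset.mem_toFinset]
    exact ⟨fun h => ⟨h.2.2, h.2.1⟩, fun h => ⟨fun i => hMA _ (h.1 i), h.2, h.1⟩⟩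
  rw [hfilter, card_filter_injective, Multiset.toFinset_card_of_nodup hM, hcard,
    Nat.descFactorial_self]

end TupleCounting

section FiberCounting

variable {α β γ : Type*} [DecidableEq α] [DecidableEq β] [DecidableEq γ]

lemma card_le_mul_card_image_add_card_filter (S : Finset α) (φ : α → β) (ρ : α → γ)
    (m : ℕ) (hρ : ∀ f ∈ S, #{g ∈ S | ρ g = ρ f} ≤ m) :
    #S ≤ m * #(S.image φ) + #{x ∈ S ×ˢ S | φ x.1 = φ x.2 ∧ ρ x.1 ≠ ρ x.2} := by
  set B := {x ∈ S ×ˢ S | φ x.1 = φ x.2 ∧ ρ x.1 ≠ ρ x.2}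
  rw [card_eq_sum_card_fiberwise fun f hf => mem_image_of_mem φ hf,
    card_eq_sum_card_fiberwise (f := fun x => φ x.1) (t := S.image φ)
      fun x hx => mem_image_of_mem φ (mem_product.1 (mem_filter.1 hx).1).1,
    mul_comm, ← smul_eq_mul, ← sum_const, ← sum_add_distrib]
  refine sum_le_sum fun v hv => ?_
  obtain ⟨f, hf, rfl⟩ := mem_image.1 hv
  calc #{g ∈ S | φ g = φ f}
      ≤ #({g ∈ S | ρ g = ρ f} ∪ {g ∈ S | φ f = φ g ∧ ρ f ≠ ρ g}) :=
        card_le_card fun g hg => by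
          simp only [mem_filter, mem_union] at hg ⊢
          by_cases hρg : ρ g = ρ f
          · exact Or.inl ⟨hg.1, hρg⟩
          · exact Or.inr ⟨hg.1, hg.2.symm, Ne.symm hρg⟩
    _ ≤ m + #{x ∈ B | φ x.1 = φ f} := by
        refine (card_union_le _ _).trans (add_le_add (hρ f hf) ?_)
        refine card_le_card_of_injOn (fun g => (f, g)) (fun g hg => ?_)
          fun g _ g' _ h => congrArg Prod.snd h
        rw [mem_coe, mem_filter] at hg
        simp [B, hf, hg.1, hg.2]

end FiberCounting

section SignedTuples

variable {α : Type*} {ι κ : Type*} [Fintype ι] [Fintype κ]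

def signedParts (w : ι ⊕ κ → α) : Multiset α × Multiset α :=
  (univ.val.map (w ∘ .inl), univ.val.map (w ∘ .inr))

lemma injective_iff_nodup_signedParts (w : ι ⊕ κ → α) :
    Function.Injective w ↔ ((signedParts w).1 + (signedParts w).2).Nodup := by
  rw [injective_iff_nodup_map_univ, ← univ_disjSum_univ]
  exact iff_of_eq (congrArg _ (Multiset.map_disjSum w))

lemma Function.Injective.of_signedParts_eq {w w' : ι ⊕ κ → α} (hw : Function.Injective w)
    (h : signedParts w' = signedParts w) : Function.Injective w' := by
  rwa [injective_iff_nodup_signedParts, h, ← injective_iff_nodup_signedParts]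

lemma card_filter_signedParts_eq [DecidableEq α] [DecidableEq ι] [DecidableEq κ] (A : Finset α)
    {w : ι ⊕ κ → α} (hwA : w ∈ Fintype.piFinset fun _ => A) (hw : Function.Injective w) :
    #{w' ∈ Fintype.piFinset (fun _ : ι ⊕ κ => A) | signedParts w' = signedParts w} =
      (Fintype.card ι).factorial * (Fintype.card κ).factorial := by
  have hwA' := Fintype.mem_piFinset.1 hwA
  rw [← card_filter_map_univ_eq A
      ((injective_iff_nodup_map_univ _).1 (hw.comp Sum.inl_injective)) (by simp) (by simp [hwA']),
    ← card_filter_map_univ_eq A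
      ((injective_iff_nodup_map_univ _).1 (hw.comp Sum.inr_injective)) (by simp) (by simp [hwA']),
    ← card_product, ← filter_product]
  refine card_nbij' (fun w' => (w' ∘ .inl, w' ∘ .inr)) (fun x => Sum.elim x.1 x.2) ?_ ?_ ?_ ?_
  · intro w' hw'
    simp_all [Fintype.mem_piFinset, signedParts, Prod.ext_iff]
  · intro x hx
    simp_all [Fintype.mem_piFinset, signedParts, Prod.ext_iff, Sum.forall]
  · intro w' _
    exact Sum.elim_comp_inl_inr w'
  · intro x _
    rfl

lemma card_filter_injective_signedParts_eq [DecidableEq α] [DecidableEq ι] [DecidableEq κ]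
    (A : Finset α) {w : ι ⊕ κ → α}
    (hw : w ∈ {w ∈ Fintype.piFinset (fun _ : ι ⊕ κ => A) | Function.Injective w}) :
    #{w' ∈ {w ∈ Fintype.piFinset (fun _ : ι ⊕ κ => A) | Function.Injective w} |
        signedParts w' = signedParts w} =
      (Fintype.card ι).factorial * (Fintype.card κ).factorial := by
  obtain ⟨hwA, hwinj⟩ := mem_filter.1 hw
  rw [filter_filter, ← card_filter_signedParts_eq A hwA hwinj]
  congr 1
  exact filter_congr fun w' _ => ⟨fun h => h.2, fun h => ⟨hwinj.of_signedParts_eq h, h⟩⟩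

end SignedTuples

section Sandwich

variable {G : Type*} [AddCommGroup G] {ι κ : Type*} [Fintype ι] [Fintype κ]

def signedSum (w : ι ⊕ κ → G) : G := ∑ i, w (.inl i) - ∑ j, w (.inr j)

lemma signedSum_eq_of_signedParts_eq {w w' : ι ⊕ κ → G} (h : signedParts w = signedParts w') :
    signedSum w = signedSum w' :=
  congrArg (fun P : Multiset G × Multiset G => P.1.sum - P.2.sum) h

variable [DecidableEq G] [DecidableEq ι] [DecidableEq κ]

variable (ι κ) in
def signedSumset (A : Finset G) : Finset G :=
  (Fintype.piFinset fun _ : ι ⊕ κ => A).image signedSum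

variable (ι κ) in
def badPairs (A : Finset G) : Finset ((ι ⊕ κ → G) × (ι ⊕ κ → G)) :=
  {x ∈ {w ∈ Fintype.piFinset (fun _ : ι ⊕ κ => A) | Function.Injective w} ×ˢ
      {w ∈ Fintype.piFinset (fun _ : ι ⊕ κ => A) | Function.Injective w} |
    signedSum x.1 = signedSum x.2 ∧ signedParts x.1 ≠ signedParts x.2}

lemma card_pow_le_card_signedSumset (A : Finset G) :
    #A ^ Fintype.card (ι ⊕ κ) ≤
      (Fintype.card ι).factorial * (Fintype.card κ).factorial * #(signedSumset ι κ A) +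
        Fintype.card (ι ⊕ κ) ^ 2 * #A ^ (Fintype.card (ι ⊕ κ) - 1) +
          #(badPairs ι κ A) := by
  have hnon := card_filter_not_injective_le (I := ι ⊕ κ) A
  have hsplit := card_filter_add_card_filter_not (s := Fintype.piFinset fun _ : ι ⊕ κ => A)
    fun w => Function.Injective w
  rw [Fintype.card_piFinset, prod_const, card_univ] at hsplit
  rw [badPairs, ← hsplit]
  set T := Fintype.piFinset fun _ : ι ⊕ κ => A
  have hinj := card_le_mul_card_image_add_card_filter {w ∈ T | Function.Injective w} signedSum
    signedParts _ fun w hw => (card_filter_injective_signedParts_eq A hw).le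
  have himage : #({w ∈ T | Function.Injective w}.image signedSum) ≤ #(signedSumset ι κ A) :=
    card_le_card (image_subset_image (filter_subset _ _))
  have := Nat.mul_le_mul_left ((Fintype.card ι).factorial * (Fintype.card κ).factorial) himage
  omega

lemma mul_card_signedSumset_le (A : Finset G) :
    (Fintype.card ι).factorial * (Fintype.card κ).factorial * #(signedSumset ι κ A) ≤
      #A ^ Fintype.card (ι ⊕ κ) + (Fintype.card ι).factorial * (Fintype.card κ).factorial *
        (Fintype.card (ι ⊕ κ) ^ 2 * #A ^ (Fintype.card (ι ⊕ κ) - 1)) := by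
  set T := Fintype.piFinset fun _ : ι ⊕ κ => A
  set F := (Fintype.card ι).factorial * (Fintype.card κ).factorial
  have hinj : F * #({w ∈ T | Function.Injective w}.image signedSum) ≤ #T := by
    refine (mul_card_image_le_card _ F fun v hv => ?_).trans (card_le_card (filter_subset _ _))
    obtain ⟨w, hw, rfl⟩ := mem_image.1 hv
    refine (card_filter_injective_signedParts_eq A hw).ge.trans (card_le_card fun w' hw' => ?_)
    rw [mem_filter] at hw' ⊢
    exact ⟨hw'.1, signedSum_eq_of_signedParts_eq hw'.2⟩
  have himage : #(signedSumset ι κ A) ≤ #({w ∈ T | Function.Injective w}.image signedSum) +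
      #{w ∈ T | ¬ Function.Injective w} := by
    calc #(signedSumset ι κ A)
        = #(({w ∈ T | Function.Injective w} ∪ {w ∈ T | ¬ Function.Injective w}).image
            signedSum) := by
          rw [filter_union_filter_not_eq]; rfl
      _ ≤ _ := by
          rw [image_union]
          exact (card_union_le _ _).trans (Nat.add_le_add_left card_image_le _)
  have hnon := card_filter_not_injective_le (I := ι ⊕ κ) A
  rw [Fintype.card_piFinset, prod_const, card_univ] at hinj
  calc F * #(signedSumset ι κ A)
      ≤ F * #({w ∈ T | Function.Injective w}.image signedSum) +
          F * #{w ∈ T | ¬ Function.Injective w} := by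
        rw [← mul_add]; exact Nat.mul_le_mul_left F himage
    _ ≤ _ := add_le_add hinj (Nat.mul_le_mul_left F hnon)

lemma abs_mul_card_signedSumset_sub_pow_le (A : Finset G) :
    |((Fintype.card ι).factorial * (Fintype.card κ).factorial * #(signedSumset ι κ A) : ℝ) -
        #A ^ Fintype.card (ι ⊕ κ)| ≤
      (Fintype.card ι).factorial * (Fintype.card κ).factorial *
        (Fintype.card (ι ⊕ κ) ^ 2 * #A ^ (Fintype.card (ι ⊕ κ) - 1)) +
          #(badPairs ι κ A) := by
  have hF : (1 : ℝ) ≤ (Fintype.card ι).factorial * (Fintype.card κ).factorial := by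
    exact_mod_cast Nat.mul_pos (Nat.factorial_pos _) (Nat.factorial_pos _)
  have hlower : (#A ^ Fintype.card (ι ⊕ κ) : ℝ) ≤
      (Fintype.card ι).factorial * (Fintype.card κ).factorial * #(signedSumset ι κ A) +
        Fintype.card (ι ⊕ κ) ^ 2 * #A ^ (Fintype.card (ι ⊕ κ) - 1) +
          #(badPairs ι κ A) := by
    exact_mod_cast card_pow_le_card_signedSumset A
  have hupper : ((Fintype.card ι).factorial * (Fintype.card κ).factorial *
      #(signedSumset ι κ A) : ℝ) ≤ #A ^ Fintype.card (ι ⊕ κ) +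
        (Fintype.card ι).factorial * (Fintype.card κ).factorial *
          (Fintype.card (ι ⊕ κ) ^ 2 * #A ^ (Fintype.card (ι ⊕ κ) - 1)) := by
    exact_mod_cast mul_card_signedSumset_le A
  have herr : (0 : ℝ) ≤ Fintype.card (ι ⊕ κ) ^ 2 * #A ^ (Fintype.card (ι ⊕ κ) - 1) := by
    positivity
  rw [abs_sub_le_iff]
  constructor
  · linarith [Nat.cast_nonneg (α := ℝ) #(badPairs ι κ A)]
  · nlinarith

end Sandwich

section EqualValueClasses

variable {R I : Type*} [DecidableEq R] [Fintype I]

def eqClass (F : I → R) (q : I) : Finset I := {q' | F q' = F q}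

lemma mem_eqClass {F : I → R} {q q' : I} : q' ∈ eqClass F q ↔ F q' = F q := by
  simp [eqClass]

lemma eqClass_eq_eqClass_iff {F : I → R} {q q' : I} : eqClass F q = eqClass F q' ↔ F q = F q' :=
  ⟨fun h => mem_eqClass.1 (h ▸ mem_eqClass.2 rfl), fun h => by simp [eqClass, h]⟩

lemma image_eqClass (F : I → R) (q : I) : (eqClass F q).image F = {F q} := by
  ext y
  simp only [mem_image, mem_eqClass, mem_singleton]
  exact ⟨fun ⟨_, h, hy⟩ => hy ▸ h, fun h => ⟨q, rfl, h.symm⟩⟩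

lemma card_image_eqClass [DecidableEq I] (F : I → R) :
    #(univ.image (eqClass F)) = #(univ.image F) := by
  have hinj : Set.InjOn (fun y => ({q' | F q' = y} : Finset I)) (univ.image F) := by
    intro y hy y' _ h
    obtain ⟨q, -, rfl⟩ := mem_image.1 hy
    have hq : q ∈ ({q' | F q' = F q} : Finset I) := by simp
    dsimp only at h
    rw [h] at hq
    exact (mem_filter.1 hq).2
  rw [← card_image_of_injOn hinj, image_image]
  rfl

end EqualValueClasses

section LinearRelations

variable {R I : Type*} [CommRing R] [NoZeroDivisors R] [DecidableEq R] [Fintype I] [DecidableEq I]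

/-- The coefficient of the value `F q` in `∑ q', ε q' * F q'` after collecting equal values. -/
def classCoeff (ε F : I → R) (q : I) : R := ∑ q' ∈ eqClass F q, ε q'

def nondegSolutions (ε : I → R) (U : Finset R) : Finset (I → R) :=
  {F ∈ Fintype.piFinset (fun _ : I => U) |
    ∑ q, ε q * F q = 0 ∧ ∃ q, classCoeff ε F q ≠ 0}

lemma eq_of_eqClass_eq_of_eqOn {ε F F' : I → R} (hF : ∑ q, ε q * F q = 0)
    (hF' : ∑ q, ε q * F' q = 0) (hclass : eqClass F' = eqClass F) {q₀ : I}
    (hq₀ : classCoeff ε F q₀ ≠ 0)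
    (hoff : ∀ q, eqClass F q ≠ eqClass F q₀ → F q = F' q) :
    F = F' := by
  have hon : ∀ q, eqClass F q = eqClass F q₀ → F q = F q₀ ∧ F' q = F' q₀ := fun q hq =>
    ⟨eqClass_eq_eqClass_iff.1 hq, eqClass_eq_eqClass_iff.1 (by rw [hclass]; exact hq)⟩
  have hsum : classCoeff ε F q₀ * (F q₀ - F' q₀) = 0 :=
    calc classCoeff ε F q₀ * (F q₀ - F' q₀)
        = ∑ q ∈ eqClass F q₀, ε q * (F q - F' q) := by
          rw [classCoeff, sum_mul]
          refine sum_congr rfl fun q hq => ?_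
          obtain ⟨h₁, h₂⟩ := hon q (eqClass_eq_eqClass_iff.2 (mem_eqClass.1 hq))
          rw [h₁, h₂]
      _ = ∑ q, ε q * (F q - F' q) := by
          refine sum_subset (subset_univ _) fun q _ hq => ?_
          rw [hoff q fun h => hq (mem_eqClass.2 (eqClass_eq_eqClass_iff.1 h)), sub_self,
            mul_zero]
      _ = 0 := by simp only [mul_sub, sum_sub_distrib, hF, hF', sub_self]
  have hq₀F : F q₀ = F' q₀ := sub_eq_zero.1 ((mul_eq_zero.1 hsum).resolve_left hq₀)
  funext q
  by_cases hq : eqClass F q = eqClass F q₀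
  · rw [(hon q hq).1, (hon q hq).2, hq₀F]
  · exact hoff q hq

/-- A nondegenerate solution is determined by its partition into classes of equal values and
by its values on all classes but one whose coefficient does not vanish. -/
lemma card_filter_eqClass_eq_le (ε : I → R) (U : Finset R) (π : I → Finset I) :
    #{F ∈ nondegSolutions ε U | eqClass F = π} ≤ #U ^ (#(univ.image π) - 1) := by
  rcases eq_empty_or_nonempty {F ∈ nondegSolutions ε U | eqClass F = π} with
    hempty | ⟨F₀, hF₀⟩
  · simp [hempty]
  obtain ⟨hF₀sol, rfl⟩ := mem_filter.1 hF₀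
  obtain ⟨-, -, q₀, hq₀⟩ := mem_filter.1 hF₀sol
  set C := (univ.image (eqClass F₀)).erase (eqClass F₀ q₀)
  have hcard : #(Fintype.piFinset fun _ : C => U.image fun y => ({y} : Finset R)) =
      #U ^ (#(univ.image (eqClass F₀)) - 1) := by
    rw [Fintype.card_piFinset, prod_const, card_univ, Fintype.card_coe,
      card_erase_of_mem (mem_image_of_mem _ (mem_univ q₀)),
      card_image_of_injective _ singleton_injective]
  rw [← hcard]
  refine card_le_card_of_injOn (fun F c => c.1.image F) (fun F hF => ?_)
    fun F hF F' hF' hFF' => ?_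
  · rw [mem_coe, mem_filter, nondegSolutions, mem_filter, Fintype.mem_piFinset] at hF
    refine Fintype.mem_piFinset.2 fun c => ?_
    obtain ⟨q, -, hq⟩ := mem_image.1 (mem_of_mem_erase c.2)
    dsimp only
    rw [← hq, ← hF.2, image_eqClass]
    exact mem_image_of_mem _ (hF.1.1 q)
  · rw [mem_coe, mem_filter, nondegSolutions, mem_filter] at hF hF'
    have hclass : eqClass F' = eqClass F := hF'.2.trans hF.2.symm
    rw [classCoeff, ← hF.2] at hq₀
    refine eq_of_eqClass_eq_of_eqOn hF.1.2.1 hF'.1.2.1 hclass hq₀ fun q hq => ?_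
    rw [hF.2] at hq
    have hc :=
      congrFun hFF' ⟨eqClass F₀ q, mem_erase.2 ⟨hq, mem_image_of_mem _ (mem_univ q)⟩⟩
    dsimp only at hc
    rwa [← hF.2, image_eqClass, ← hclass, image_eqClass, singleton_inj] at hc

lemma sum_nondegSolutions_pow_card_image_le (ε : I → R) (U : Finset R) {p : ℝ} (hp : 0 ≤ p) :
    ∑ F ∈ nondegSolutions ε U, p ^ #(univ.image F) ≤ (2 ^ Fintype.card I) ^ Fintype.card I *
      ∑ j ∈ range (Fintype.card I), (#U : ℝ) ^ j * p ^ (j + 1) := by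
  set S := ∑ j ∈ range (Fintype.card I), (#U : ℝ) ^ j * p ^ (j + 1)
  have hcard : ((2 ^ Fintype.card I) ^ Fintype.card I : ℝ) = Fintype.card (I → Finset I) := by
    simp [Fintype.card_finset]
  rw [← sum_fiberwise (nondegSolutions ε U) eqClass, hcard, ← nsmul_eq_mul, ← card_univ,
    ← sum_const]
  refine sum_le_sum fun π _ => ?_
  rw [sum_congr rfl fun F hF => by rw [← card_image_eqClass, (mem_filter.1 hF).2], sum_const,
    nsmul_eq_mul]
  rcases eq_empty_or_nonempty {F ∈ nondegSolutions ε U | eqClass F = π} with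
    hempty | ⟨F, hF⟩
  · rw [hempty, card_empty, Nat.cast_zero, zero_mul]
    exact sum_nonneg fun j _ => by positivity
  obtain ⟨-, -, q, -⟩ := mem_filter.1 (mem_filter.1 hF).1
  have hpos : 0 < #(univ.image π) := card_pos.2 ⟨π q, mem_image_of_mem _ (mem_univ q)⟩
  have hle : #(univ.image π) ≤ Fintype.card I := card_image_le.trans_eq card_univ
  calc (#{F ∈ nondegSolutions ε U | eqClass F = π} : ℝ) * p ^ #(univ.image π)
      ≤ (#U : ℝ) ^ (#(univ.image π) - 1) * p ^ (#(univ.image π) - 1 + 1) := by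
        rw [Nat.sub_add_cancel hpos]
        gcongr
        exact_mod_cast card_filter_eqClass_eq_le ε U π
    _ ≤ S := single_le_sum (f := fun j => (#U : ℝ) ^ j * p ^ (j + 1))
        (fun j _ => by positivity) (mem_range.2 (by omega))

end LinearRelations

lemma Multiset.eq_and_eq_of_add_eq_add_of_disjoint {α : Type*} [DecidableEq α]
    {P N P' N' : Multiset α} (hPN : Disjoint P N) (hcard : card P' ≤ card P)
    (h : P + N' = P' + N) : P = P' ∧ N = N' := by
  have hle : P ≤ P' := le_iff_count.2 fun a => by
    have hcount := congrArg (count a) h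
    rw [count_add, count_add] at hcount
    by_cases ha : a ∈ N
    · rw [count_eq_zero.2 (disjoint_right.1 hPN ha)]
      exact Nat.zero_le _
    · rw [count_eq_zero.2 ha] at hcount
      omega
  obtain rfl := eq_of_le_of_card_le hle hcard
  exact ⟨rfl, (add_left_cancel h).symm⟩

section BadPairs

variable {ι κ : Type*} [Fintype ι] [Fintype κ]

def pairSign : (ι ⊕ κ) ⊕ (ι ⊕ κ) → ℤ := Sum.elim (Sum.elim 1 (-1)) (Sum.elim (-1) 1)

lemma sum_pairSign_mul (w w' : ι ⊕ κ → ℤ) :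
    ∑ q, pairSign q * Sum.elim w w' q = signedSum w - signedSum w' := by
  simp only [Fintype.sum_sum_type, pairSign, signedSum, Sum.elim_inl, Sum.elim_inr,
    Pi.one_apply, Pi.neg_apply, one_mul, neg_one_mul, sum_neg_distrib]
  ring

lemma sum_filter_pairSign (F : (ι ⊕ κ) ⊕ (ι ⊕ κ) → ℤ) (y : ℤ) :
    ∑ q ∈ {q | F q = y}, pairSign q =
      (#{a | F (.inl (.inl a)) = y} : ℤ) - #{b | F (.inl (.inr b)) = y} -
        #{a | F (.inr (.inl a)) = y} + #{b | F (.inr (.inr b)) = y} := by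
  have hneg : ∀ (P : Prop) [Decidable P], (if P then (-1 : ℤ) else 0) = -(if P then 1 else 0) :=
    fun P _ => by split_ifs <;> simp
  rw [sum_filter]
  simp only [Fintype.sum_sum_type, pairSign, Sum.elim_inl, Sum.elim_inr, Pi.one_apply,
    Pi.neg_apply, hneg, sum_neg_distrib, sum_boole]
  ring

lemma signedParts_eq_of_classCoeff_eq_zero {w w' : ι ⊕ κ → ℤ} (hw : Function.Injective w)
    (h : ∀ q, classCoeff pairSign (Sum.elim w w') q = 0) : signedParts w = signedParts w' := by
  have hsum : ∀ y, ∑ q ∈ {q | Sum.elim w w' q = y}, pairSign q = 0 := by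
    intro y
    by_cases hy : ∃ q, Sum.elim w w' q = y
    · obtain ⟨q, rfl⟩ := hy
      exact h q
    · push Not at hy
      simp [hy]
  have hadd : (signedParts w).1 + (signedParts w').2 = (signedParts w').1 + (signedParts w).2 :=
    Multiset.ext.2 fun y => by
      have hy := hsum y
      rw [sum_filter_pairSign] at hy
      have h₁ : ((signedParts w).1 + (signedParts w').2).count y =
          #{a | Sum.elim w w' (.inl (.inl a)) = y} + #{b | Sum.elim w w' (.inr (.inr b)) = y} := by
        simp only [signedParts, Multiset.count_add, count_map_univ]
        rfl
      have h₂ : ((signedParts w').1 + (signedParts w).2).count y =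
          #{a | Sum.elim w w' (.inr (.inl a)) = y} + #{b | Sum.elim w w' (.inl (.inr b)) = y} := by
        simp only [signedParts, Multiset.count_add, count_map_univ]
        rfl
      rw [h₁, h₂]
      omega
  have hdisj := (Multiset.nodup_add.1 ((injective_iff_nodup_signedParts w).1 hw)).2.2
  obtain ⟨h₁, h₂⟩ :=
    Multiset.eq_and_eq_of_add_eq_add_of_disjoint hdisj (by simp [signedParts]) hadd
  exact Prod.ext h₁ h₂

variable [DecidableEq ι] [DecidableEq κ]

lemma sum_badPairs_pow_card_image_le (U : Finset ℤ) {p : ℝ} (hp : 0 ≤ p) :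
    ∑ x ∈ badPairs ι κ U, p ^ #(univ.image (Sum.elim x.1 x.2)) ≤
      (2 ^ (2 * Fintype.card (ι ⊕ κ))) ^ (2 * Fintype.card (ι ⊕ κ)) *
        ∑ j ∈ range (2 * Fintype.card (ι ⊕ κ)), (#U : ℝ) ^ j * p ^ (j + 1) := by
  have hcard : Fintype.card ((ι ⊕ κ) ⊕ (ι ⊕ κ)) = 2 * Fintype.card (ι ⊕ κ) := by
    rw [Fintype.card_sum]; ring
  have himage := sum_image (f := fun F : (ι ⊕ κ) ⊕ (ι ⊕ κ) → ℤ => p ^ #(univ.image F))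
    (s := badPairs ι κ U) (g := fun x => Sum.elim x.1 x.2) fun x _ y _ hxy =>
      Prod.ext (funext fun i => congrFun hxy (.inl i)) (funext fun j => congrFun hxy (.inr j))
  rw [← hcard]
  refine himage.ge.trans ((sum_le_sum_of_subset_of_nonneg (fun F hF => ?_)
    fun _ _ _ => by positivity).trans (sum_nondegSolutions_pow_card_image_le pairSign U hp))
  obtain ⟨x, hx, rfl⟩ := mem_image.1 hF
  simp only [badPairs, mem_filter, mem_product, Fintype.mem_piFinset] at hx
  obtain ⟨⟨⟨hx₁, hinj⟩, hx₂, -⟩, hsum, hparts⟩ := hx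
  refine mem_filter.2 ⟨Fintype.mem_piFinset.2 fun q => ?_, ?_, ?_⟩
  · cases q <;> simp [hx₁, hx₂]
  · rw [sum_pairSign_mul, hsum, sub_self]
  · by_contra! hzero
    exact hparts (signedParts_eq_of_classCoeff_eq_zero hinj hzero)

end BadPairs

section ExpectedBadPairs

variable {ι κ : Type*} [Fintype ι] [Fintype κ] [DecidableEq ι] [DecidableEq κ]

lemma badPairs_eq_filter {G : Type*} [AddCommGroup G] [DecidableEq G] {B U : Finset G}
    (hBU : B ⊆ U) :
    badPairs ι κ B = {x ∈ badPairs ι κ U | univ.image (Sum.elim x.1 x.2) ⊆ B} := by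
  ext x
  have hsupp :
      univ.image (Sum.elim x.1 x.2) ⊆ B ↔ (∀ a, x.1 a ∈ B) ∧ ∀ a, x.2 a ∈ B := by
    simp [image_subset_iff]
  simp only [badPairs, mem_filter, mem_product, Fintype.mem_piFinset, hsupp]
  constructor
  · rintro ⟨⟨⟨h₁, hinj₁⟩, h₂, hinj₂⟩, hx⟩
    exact ⟨⟨⟨⟨fun i => hBU (h₁ i), hinj₁⟩, fun i => hBU (h₂ i), hinj₂⟩, hx⟩,
      h₁, h₂⟩
  · rintro ⟨⟨⟨⟨-, hinj₁⟩, -, hinj₂⟩, hx⟩, h₁, h₂⟩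
    exact ⟨⟨⟨h₁, hinj₁⟩, h₂, hinj₂⟩, hx⟩

lemma binomialExp_card_badPairs_le {N : ℕ} {p : ℝ} (hp : 0 ≤ p) :
    binomialExp N p (fun A => #(badPairs ι κ (A.map (Nat.castEmbedding : ℕ ↪ ℤ)))) ≤
      (2 ^ (2 * Fintype.card (ι ⊕ κ))) ^ (2 * Fintype.card (ι ⊕ κ)) *
        ∑ j ∈ range (2 * Fintype.card (ι ⊕ κ)), ((N : ℝ) + 1) ^ j * p ^ (j + 1) := by
  set U := (range (N + 1)).map (Nat.castEmbedding : ℕ ↪ ℤ)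
  rw [binomialExp_congr fun A hA => by rw [badPairs_eq_filter (map_subset_map.2 hA)],
    binomialExp_card_filter_subset_map]
  · simpa [U] using sum_badPairs_pow_card_image_le (ι := ι) (κ := κ) U hp
  · intro x hx
    rw [image_subset_iff]
    simp only [badPairs, mem_filter, mem_product, Fintype.mem_piFinset] at hx
    rintro (q | q) -
    exacts [hx.1.1.1 q, hx.1.2.1 q]

end ExpectedBadPairs

section RandomSumsets

variable {p : ℕ → ℝ}

lemma tendstoInProb_card_div (hp : ∀ᶠ N in atTop, 0 ≤ p N ∧ p N ≤ 1)
    (hK : Tendsto (fun N : ℕ => ((N : ℝ) + 1) * p N) atTop atTop) :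
    TendstoInProb p (fun N A => #A / (((N : ℝ) + 1) * p N)) 1 := by
  refine tendstoInProb_of_binomialExp_sq hp ?_
  refine squeeze_zero' ?_ ?_ (tendsto_inv_atTop_zero.comp hK)
  · filter_upwards [hp] with N hN
    exact sum_nonneg fun A _ => mul_nonneg (binomialWeight_nonneg hN.1 hN.2 A) (sq_nonneg _)
  · filter_upwards [hp, hK.eventually_gt_atTop 0] with N hN hKN
    set K := ((N : ℝ) + 1) * p N
    have hscale : binomialExp N (p N) (fun A => ((#A : ℝ) / K - 1) ^ 2) =
        binomialExp N (p N) (fun A => ((#A : ℝ) - K) ^ 2) / K ^ 2 := by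
      rw [← binomialExp_div_const]
      exact binomialExp_congr fun A _ => by field_simp
    rw [Function.comp_apply, hscale, binomialExp_card_sub_sq, div_le_iff₀ (by positivity), sq,
      ← mul_assoc, inv_mul_cancel₀ hKN.ne', one_mul]
    nlinarith

lemma sum_pow_mul_pow_succ_le {N m : ℕ} {p : ℝ} (hK : 1 ≤ ((N : ℝ) + 1) * p) :
    ∑ j ∈ range m, ((N : ℝ) + 1) ^ j * p ^ (j + 1) ≤
      m * ((((N : ℝ) + 1) * p) ^ m / (N + 1)) := by
  have hterm : ∀ j ∈ range m,
      ((N : ℝ) + 1) ^ j * p ^ (j + 1) ≤ (((N : ℝ) + 1) * p) ^ m / (N + 1) := fun j hj => by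
    rw [le_div_iff₀ (by positivity), mul_right_comm, ← pow_succ, ← mul_pow]
    exact pow_le_pow_right₀ hK (mem_range.1 hj)
  simpa using sum_le_card_nsmul _ _ _ hterm

variable {ι κ : Type*} [Fintype ι] [Fintype κ] [DecidableEq ι] [DecidableEq κ]

lemma tendstoInProb_card_badPairs_div (hp : ∀ᶠ N in atTop, 0 ≤ p N ∧ p N ≤ 1)
    (hK : Tendsto (fun N : ℕ => ((N : ℝ) + 1) * p N) atTop atTop)
    (hKn : Tendsto (fun N : ℕ => (((N : ℝ) + 1) * p N) ^ Fintype.card (ι ⊕ κ) / (N + 1))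
      atTop (𝓝 0)) :
    TendstoInProb p (fun N A => #(badPairs ι κ (A.map (Nat.castEmbedding : ℕ ↪ ℤ))) /
      (((N : ℝ) + 1) * p N) ^ Fintype.card (ι ⊕ κ)) 0 := by
  set n := Fintype.card (ι ⊕ κ)
  set C : ℝ := (2 ^ (2 * n)) ^ (2 * n) * (2 * n)
  have hY : ∀ᶠ N : ℕ in atTop, ∀ A : Finset ℕ,
      0 ≤ (#(badPairs ι κ (A.map (Nat.castEmbedding : ℕ ↪ ℤ))) : ℝ) /
        (((N : ℝ) + 1) * p N) ^ n := by
    filter_upwards [hK.eventually_gt_atTop 0] with N hKN A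
    positivity
  refine tendstoInProb_zero_of_binomialExp hp hY ?_
  refine squeeze_zero' ?_ ?_ (by simpa using hKn.const_mul C)
  · filter_upwards [hp, hY] with N hN hYN
    exact sum_nonneg fun A _ => mul_nonneg (binomialWeight_nonneg hN.1 hN.2 A) (hYN A)
  · filter_upwards [hp, hK.eventually_ge_atTop 1] with N hN hKN
    set K := ((N : ℝ) + 1) * p N
    have hKpos : 0 < K ^ n := pow_pos (by linarith) n
    rw [binomialExp_div_const, div_le_iff₀ hKpos]
    refine (binomialExp_card_badPairs_le hN.1).trans ?_
    calc (2 ^ (2 * n) : ℝ) ^ (2 * n) *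
          ∑ j ∈ range (2 * n), ((N : ℝ) + 1) ^ j * p N ^ (j + 1)
        ≤ (2 ^ (2 * n)) ^ (2 * n) * ((2 * n : ℕ) * (K ^ (2 * n) / (N + 1))) := by
          gcongr
          exact sum_pow_mul_pow_succ_le hKN
      _ = C * (K ^ n / (N + 1)) * K ^ n := by
          rw [two_mul n, pow_add]
          push_cast
          ring

lemma tendstoInProb_mul_card_signedSumset_div (hn : Fintype.card (ι ⊕ κ) ≠ 0)
    (hp : ∀ᶠ N in atTop, 0 ≤ p N ∧ p N ≤ 1)
    (hK : Tendsto (fun N : ℕ => ((N : ℝ) + 1) * p N) atTop atTop)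
    (hKn : Tendsto (fun N : ℕ => (((N : ℝ) + 1) * p N) ^ Fintype.card (ι ⊕ κ) / (N + 1))
      atTop (𝓝 0)) :
    TendstoInProb p (fun N A => (Fintype.card ι).factorial * (Fintype.card κ).factorial *
      #(signedSumset ι κ (A.map (Nat.castEmbedding : ℕ ↪ ℤ))) /
        (((N : ℝ) + 1) * p N) ^ Fintype.card (ι ⊕ κ)) 1 := by
  set n := Fintype.card (ι ⊕ κ)
  set F : ℝ := (Fintype.card ι).factorial * (Fintype.card κ).factorial
  have hk := tendstoInProb_card_div hp hK
  have hpow : TendstoInProb p (fun N A => (#A / (((N : ℝ) + 1) * p N)) ^ n) 1 := by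
    simpa using hk.comp hp (continuous_pow n).continuousAt
  have hinv : TendstoInProb p (fun N _ => (((N : ℝ) + 1) * p N)⁻¹) 0 :=
    tendstoInProb_of_tendsto (tendsto_inv_atTop_zero.comp hK)
  have herr : TendstoInProb p (fun N A => F * n ^ 2 * (#A / (((N : ℝ) + 1) * p N)) ^ (n - 1) *
      (((N : ℝ) + 1) * p N)⁻¹ + #(badPairs ι κ (A.map (Nat.castEmbedding : ℕ ↪ ℤ))) /
        (((N : ℝ) + 1) * p N) ^ n) 0 := by
    have h₁ := hk.comp₂ hp hinv (φ := fun x y => F * n ^ 2 * x ^ (n - 1) * y) (by fun_prop)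
    have h₂ := h₁.comp₂ hp (tendstoInProb_card_badPairs_div hp hK hKn) (φ := (· + ·))
      continuous_add.continuousAt
    simp only [mul_zero, add_zero] at h₂
    exact h₂
  refine hpow.of_abs_sub_le hp herr ?_
  filter_upwards [hK.eventually_gt_atTop 0] with N hKN A
  set K := ((N : ℝ) + 1) * p N
  have hsandwich := abs_mul_card_signedSumset_sub_pow_le (ι := ι) (κ := κ)
    (A.map (Nat.castEmbedding : ℕ ↪ ℤ))
  rw [card_map] at hsandwich
  have hKpow : K ^ (n - 1) * K = K ^ n := by rw [← pow_succ, Nat.sub_add_cancel (by omega)]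
  rw [div_pow, ← sub_div, abs_div, abs_of_pos (pow_pos hKN n), div_le_iff₀ (pow_pos hKN n),
    add_mul, div_mul_cancel₀ _ (pow_pos hKN n).ne', div_pow, ← hKpow]
  field_simp
  nlinarith

end RandomSumsets

lemma genSumset_eq_signedSumset (s d : ℕ) (A : Finset ℤ) :
    genSumset s d A = signedSumset (Fin s) (Fin d) A := by
  have hsum (a : Fin (s + d) → ℤ) : (∑ i : Fin (s + d), if (i : ℕ) < s then a i else -a i) =
      signedSum (a ∘ finSumFinEquiv) := by
    simp [Fin.sum_univ_add, signedSum, sub_eq_add_neg]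
  ext v
  simp only [genSumset, signedSumset, mem_image, Fintype.mem_piFinset]
  constructor
  · rintro ⟨a, ha, rfl⟩
    exact ⟨a ∘ finSumFinEquiv, fun q => ha _, (hsum a).symm⟩
  · rintro ⟨w, hw, rfl⟩
    refine ⟨w ∘ finSumFinEquiv.symm, fun i => hw _, ?_⟩
    rw [hsum]
    simp [Function.comp_def]

lemma tendstoInProb_mul_card_genSumset_div {p : ℕ → ℝ} {s d n : ℕ} (hsd : s + d = n)
    (hn : n ≠ 0) (hp : ∀ᶠ N in atTop, 0 ≤ p N ∧ p N ≤ 1)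
    (hK : Tendsto (fun N : ℕ => ((N : ℝ) + 1) * p N) atTop atTop)
    (hKn : Tendsto (fun N : ℕ => (((N : ℝ) + 1) * p N) ^ n / (N + 1)) atTop (𝓝 0)) :
    TendstoInProb p (fun N A => ((s.factorial * d.factorial : ℕ) : ℝ) *
      #(genSumset s d (A.image fun m : ℕ => (m : ℤ))) / (((N : ℝ) + 1) * p N) ^ n) 1 := by
  have hcard : Fintype.card (Fin s ⊕ Fin d) = n := by simp [hsd]
  have hmap (A : Finset ℕ) :
      A.map (Nat.castEmbedding : ℕ ↪ ℤ) = A.image fun m : ℕ => (m : ℤ) := by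
    ext; simp
  have := tendstoInProb_mul_card_signedSumset_div (ι := Fin s) (κ := Fin d) (hcard ▸ hn) hp hK
    (hcard ▸ hKn)
  simpa [genSumset_eq_signedSumset, hmap, hcard] using this

lemma factorial_mul_factorial_lt {s d s' d' : ℕ} (hds : d ≤ s) (hd : d' < d)
    (hsum : s + d = s' + d') : s.factorial * d.factorial < s'.factorial * d'.factorial := by
  obtain ⟨t, rfl⟩ : ∃ t, d = d' + t := ⟨d - d', by omega⟩
  obtain rfl : s' = s + t := by omega
  have hdesc := Nat.factorial_mul_descFactorial (Nat.le_add_left t d')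
  rw [Nat.add_sub_cancel] at hdesc
  calc s.factorial * (d' + t).factorial
      ≤ s.factorial * (d'.factorial * s ^ t) := by
        rw [← hdesc]
        gcongr
        exact (Nat.descFactorial_le_pow _ _).trans (Nat.pow_le_pow_left hds t)
    _ < s.factorial * (d'.factorial * (s + 1) ^ t) :=
        Nat.mul_lt_mul_of_pos_left (Nat.mul_lt_mul_of_pos_left
          (Nat.pow_lt_pow_left (Nat.lt_succ_self s) (by omega)) (Nat.factorial_pos _))
          (Nat.factorial_pos _)
    _ ≤ (s + t).factorial * d'.factorial := by
        rw [mul_left_comm, mul_comm]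
        exact Nat.mul_le_mul_right _ Nat.factorial_mul_pow_le_factorial

section PowerLawParameter

variable {c δ : ℝ}

lemma eventually_mul_rpow_neg_mem_Icc (hc : 0 < c) (hδ : 0 < δ) :
    ∀ᶠ N : ℕ in atTop, 0 ≤ c * (N : ℝ) ^ (-δ) ∧ c * (N : ℝ) ^ (-δ) ≤ 1 := by
  have hlim : Tendsto (fun N : ℕ => c * (N : ℝ) ^ (-δ)) atTop (𝓝 0) := by
    simpa using ((tendsto_rpow_neg_atTop hδ).comp tendsto_natCast_atTop_atTop).const_mul c
  filter_upwards [hlim.eventually (ge_mem_nhds zero_lt_one)] with N hN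
  exact ⟨by positivity, hN⟩

lemma rpow_one_sub_eq_mul_rpow_neg {x : ℝ} (hx : 0 < x) : x ^ (1 - δ) = x * x ^ (-δ) := by
  rw [sub_eq_add_neg, Real.rpow_add hx, Real.rpow_one]

lemma tendsto_mul_mul_rpow_neg_atTop (hc : 0 < c) (hδ : δ < 1) :
    Tendsto (fun N : ℕ => ((N : ℝ) + 1) * (c * (N : ℝ) ^ (-δ))) atTop atTop := by
  have hlim : Tendsto (fun N : ℕ => c * (N : ℝ) ^ (1 - δ)) atTop atTop :=
    ((tendsto_rpow_atTop (by linarith)).comp tendsto_natCast_atTop_atTop).const_mul_atTop hc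
  refine tendsto_atTop_mono' _ ?_ hlim
  filter_upwards [eventually_gt_atTop 0] with N hN
  have hN : (0 : ℝ) < N := by exact_mod_cast hN
  rw [rpow_one_sub_eq_mul_rpow_neg hN]
  nlinarith [Real.rpow_pos_of_pos hN (-δ)]

lemma tendsto_mul_mul_rpow_neg_pow_div (hc : 0 < c) {h : ℕ} (hδh : h * (1 - δ) < 1) :
    Tendsto (fun N : ℕ => (((N : ℝ) + 1) * (c * (N : ℝ) ^ (-δ))) ^ h / (N + 1)) atTop
      (𝓝 0) := by
  have hlim :
      Tendsto (fun N : ℕ => (2 * c) ^ h * (N : ℝ) ^ (h * (1 - δ) - 1)) atTop (𝓝 0) := by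
    have := ((tendsto_rpow_neg_atTop (by linarith : 0 < 1 - h * (1 - δ))).comp
      tendsto_natCast_atTop_atTop).const_mul ((2 * c) ^ h)
    simpa using this
  refine squeeze_zero' (Eventually.of_forall fun N => by positivity) ?_ hlim
  filter_upwards [eventually_gt_atTop 0] with N hN
  have hN : (0 : ℝ) < N := by exact_mod_cast hN
  have hN1 : (1 : ℝ) ≤ N := by exact_mod_cast hN
  calc (((N : ℝ) + 1) * (c * (N : ℝ) ^ (-δ))) ^ h / (N + 1)
      ≤ (2 * c * (N : ℝ) ^ (1 - δ)) ^ h / N := by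
        gcongr ?_ ^ h / ?_
        · rw [rpow_one_sub_eq_mul_rpow_neg hN]
          nlinarith [mul_nonneg (sub_nonneg.2 hN1) (mul_pos hc (Real.rpow_pos_of_pos hN (-δ))).le]
        · linarith
    _ = (2 * c) ^ h * (N : ℝ) ^ (h * (1 - δ) - 1) := by
        rw [mul_pow, ← Real.rpow_natCast ((N : ℝ) ^ (1 - δ)), ← Real.rpow_mul hN.le,
          Real.rpow_sub_one hN.ne', mul_comm (1 - δ)]
        ring

end PowerLawParameter

theorem fast_decay_ratio_general (h : ℕ) (c δ : ℝ) (hc : 0 < c)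
    (hδ1 : ((h : ℝ) - 1) / (h : ℝ) < δ) (hδ2 : δ < 1)
    (s₁ d₁ s₂ d₂ : ℕ) (hsd1 : d₁ ≤ s₁)
    (hh1 : s₁ + d₁ = h) (hh2 : s₂ + d₂ = h) (hd : d₂ < d₁) :
    (∀ ε : ℝ, 0 < ε →
      Tendsto (fun N : ℕ =>
        binomialProb N (c * (N : ℝ) ^ (-δ)) fun A =>
          ε < |((genSumset s₁ d₁ (A.image fun m : ℕ => (m : ℤ))).card : ℝ) /
                ((genSumset s₂ d₂ (A.image fun m : ℕ => (m : ℤ))).card : ℝ) -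
              ((Nat.factorial s₂ * Nat.factorial d₂ : ℕ) : ℝ) /
                ((Nat.factorial s₁ * Nat.factorial d₁ : ℕ) : ℝ)|)
        atTop (nhds 0)) ∧
    Tendsto (fun N : ℕ =>
      binomialProb N (c * (N : ℝ) ^ (-δ)) fun A =>
        (genSumset s₂ d₂ (A.image fun m : ℕ => (m : ℤ))).card <
          (genSumset s₁ d₁ (A.image fun m : ℕ => (m : ℤ))).card)
      atTop (nhds 1) := by
  have hh : (1 : ℝ) ≤ h := by exact_mod_cast (show 1 ≤ h by omega)
  rw [div_lt_iff₀ (by linarith)] at hδ1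
  have hδ : 0 < δ := by nlinarith
  set p : ℕ → ℝ := fun N => c * (N : ℝ) ^ (-δ)
  have hp : ∀ᶠ N in atTop, 0 ≤ p N ∧ p N ≤ 1 := eventually_mul_rpow_neg_mem_Icc hc hδ
  have hK := tendsto_mul_mul_rpow_neg_atTop hc hδ2
  have hKh := tendsto_mul_mul_rpow_neg_pow_div hc (h := h) (by linarith)
  have hKh_ne : ∀ᶠ N : ℕ in atTop, (((N : ℝ) + 1) * p N) ^ h ≠ 0 :=
    (hK.eventually_gt_atTop 0).mono fun N hN => (pow_pos hN h).ne'
  have hratio := (tendstoInProb_mul_card_genSumset_div hh1 (by omega) hp hK hKh).div_of_mul_div hp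
    (by positivity) (by positivity) hKh_ne
    (tendstoInProb_mul_card_genSumset_div hh2 (by omega) hp hK hKh)
  have hr : (1 : ℝ) <
      ((s₂.factorial * d₂.factorial : ℕ) : ℝ) / ((s₁.factorial * d₁.factorial : ℕ) : ℝ) :=
    (one_lt_div (by positivity)).2
      (Nat.cast_lt.2 (factorial_mul_factorial_lt hsd1 hd (hh1.trans hh2.symm)))
  refine ⟨hratio, hratio.tendsto_binomialProb hp hr fun N A hA => ?_⟩
  exact_mod_cast
    ((one_lt_div_iff.1 hA).resolve_right fun hneg => (Nat.cast_nonneg _).not_gt hneg.1).2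

theorem fast_decay_ratio (h : ℕ) (hh : 2 ≤ h) (c δ : ℝ) (hc : 0 < c)
    (hδ1 : ((h : ℝ) - 1) / (h : ℝ) < δ) (hδ2 : δ < 1)
    (s₁ d₁ s₂ d₂ : ℕ) (hsd1 : d₁ ≤ s₁) (hsd2 : d₂ ≤ s₂)
    (hh1 : s₁ + d₁ = h) (hh2 : s₂ + d₂ = h) (hd : d₂ < d₁) :
    (∀ ε : ℝ, 0 < ε →
      Tendsto (fun N : ℕ =>
        binomialProb N (c * (N : ℝ) ^ (-δ)) fun A =>
          ε < |((genSumset s₁ d₁ (A.image fun m : ℕ => (m : ℤ))).card : ℝ) /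
                ((genSumset s₂ d₂ (A.image fun m : ℕ => (m : ℤ))).card : ℝ) -
              ((Nat.factorial s₂ * Nat.factorial d₂ : ℕ) : ℝ) /
                ((Nat.factorial s₁ * Nat.factorial d₁ : ℕ) : ℝ)|)
        atTop (nhds 0)) ∧
    Tendsto (fun N : ℕ =>
      binomialProb N (c * (N : ℝ) ^ (-δ)) fun A =>
        (genSumset s₂ d₂ (A.image fun m : ℕ => (m : ℤ))).card <
          (genSumset s₁ d₁ (A.image fun m : ℕ => (m : ℤ))).card)
      atTop (nhds 1) :=
  fast_decay_ratio_general h c δ hc hδ1 hδ2 s₁ d₁ s₂ d₂ hsd1 hh1 hh2 hd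
end

section
/- Let s ≥ d ≥ 0 be integers with h := s + d ≥ 2. Then for every real number x, the series g(x; s, d) = Σ_{k=1}^∞ (−1)^{k−1}·(b_{h,k}/(s!·d!)^k)·x^{hk} converges. -/
/-!
On `[0, 1]` each summand of the kernel `Σ_{i ≤ j} (-1)^i C(h,i) (1 - (i - t)/j)^(h-1)` has absolute
value at most `C(h,i) 2^(h-1)`, so the kernel is bounded by `4^h`. Hence
`|b_{h,k}| ≤ 2h (h^(h-1) 4^h)^k / k!`, and the series for `g` is dominated by an exponential
series in `|x|^h`.
-/

open Finset

/-- The constant `b_{h,k}` of Hogan–Miller. -/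
noncomputable def bConst (h k : ℕ) : ℝ :=
  (1 / ((Nat.factorial k : ℝ) * (Nat.factorial (h - 1) : ℝ) ^ k)) *
    (2 * ∑ j ∈ Finset.Icc 1 (h / 2),
      (j : ℝ) ^ ((h - 1) * k) *
        ∫ t in (0:ℝ)..(1:ℝ),
          (∑ i ∈ Finset.range (j + 1),
            (-1 : ℝ) ^ i * (Nat.choose h i : ℝ) *
              (1 - ((i : ℝ) - t) / (j : ℝ)) ^ (h - 1)) ^ k)

open Nat

/-- The integrand of `b_{h,k}` is the `k`-th power of this function. -/
noncomputable def bKernel (h j : ℕ) (t : ℝ) : ℝ :=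
  ∑ i ∈ range (j + 1), (-1 : ℝ) ^ i * (h.choose i : ℝ) * (1 - ((i : ℝ) - t) / j) ^ (h - 1)

lemma bConst_eq (h k : ℕ) :
    bConst h k = 1 / ((k ! : ℝ) * ((h - 1)! : ℝ) ^ k) *
      (2 * ∑ j ∈ Icc 1 (h / 2), (j : ℝ) ^ ((h - 1) * k) * ∫ t in (0 : ℝ)..1, bKernel h j t ^ k) :=
  rfl

lemma abs_one_sub_div_le_two {i j t : ℝ} (hi : 0 ≤ i) (hij : i ≤ j) (ht0 : 0 ≤ t) (ht1 : t ≤ 1)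
    (hj : 1 ≤ j) : |1 - (i - t) / j| ≤ 2 := by
  have hj0 : 0 < j := by linarith
  rw [abs_le]
  constructor
  · have : (i - t) / j ≤ 1 := by rw [div_le_one hj0]; linarith
    linarith
  · have : -1 ≤ (i - t) / j := by rw [le_div_iff₀ hj0]; linarith
    linarith

lemma sum_range_choose_le_two_pow {m h : ℕ} (hmh : m ≤ h) :
    ∑ i ∈ range (m + 1), (h.choose i : ℝ) ≤ 2 ^ h := by
  calc ∑ i ∈ range (m + 1), (h.choose i : ℝ)
      ≤ ∑ i ∈ range (h + 1), (h.choose i : ℝ) :=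
        sum_le_sum_of_subset_of_nonneg (range_subset_range.mpr (by omega))
          fun _ _ _ => Nat.cast_nonneg _
    _ = 2 ^ h := by exact_mod_cast Nat.sum_range_choose h

lemma abs_bKernel_le {h j : ℕ} {t : ℝ} (hj : 1 ≤ j) (hjh : j ≤ h) (ht0 : 0 ≤ t) (ht1 : t ≤ 1) :
    |bKernel h j t| ≤ 4 ^ h := by
  have hterm : ∀ i ∈ range (j + 1),
      |(-1 : ℝ) ^ i * (h.choose i : ℝ) * (1 - ((i : ℝ) - t) / j) ^ (h - 1)|
        ≤ (h.choose i : ℝ) * 2 ^ (h - 1) := by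
    intro i hi
    have hij : (i : ℝ) ≤ j := by exact_mod_cast Nat.lt_succ_iff.mp (mem_range.mp hi)
    rw [abs_mul, abs_mul, abs_pow, abs_neg, abs_one, one_pow, one_mul, Nat.abs_cast, abs_pow]
    gcongr
    exact abs_one_sub_div_le_two (Nat.cast_nonneg i) hij ht0 ht1 (by exact_mod_cast hj)
  calc |bKernel h j t|
      ≤ ∑ i ∈ range (j + 1), (h.choose i : ℝ) * 2 ^ (h - 1) :=
        (abs_sum_le_sum_abs _ _).trans (sum_le_sum hterm)
    _ = (∑ i ∈ range (j + 1), (h.choose i : ℝ)) * 2 ^ (h - 1) := (sum_mul _ _ _).symm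
    _ ≤ 2 ^ h * 2 ^ h := by
        gcongr
        · exact sum_range_choose_le_two_pow hjh
        · norm_num
        · omega
    _ = 4 ^ h := by rw [← mul_pow]; norm_num

lemma abs_integral_bKernel_pow_le {h j : ℕ} (k : ℕ) (hj : 1 ≤ j) (hjh : j ≤ h) :
    |∫ t in (0 : ℝ)..1, bKernel h j t ^ k| ≤ (4 ^ h) ^ k := by
  have := intervalIntegral.norm_integral_le_of_norm_le_const (a := 0) (b := 1)
    (f := fun t => bKernel h j t ^ k) (C := (4 ^ h) ^ k) fun t ht => by
      rw [Set.uIoc_of_le zero_le_one] at ht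
      rw [Real.norm_eq_abs, abs_pow]
      gcongr
      exact abs_bKernel_le hj hjh ht.1.le ht.2
  simpa using this

lemma abs_bConst_le (h k : ℕ) :
    |bConst h k| ≤ 2 * h * ((h : ℝ) ^ (h - 1) * 4 ^ h) ^ k / k ! := by
  have hterm : ∀ j ∈ Icc 1 (h / 2),
      |(j : ℝ) ^ ((h - 1) * k) * ∫ t in (0 : ℝ)..1, bKernel h j t ^ k|
        ≤ ((h : ℝ) ^ (h - 1) * 4 ^ h) ^ k := by
    intro j hj
    obtain ⟨hj1, hj2⟩ := mem_Icc.mp hj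
    have hjh : j ≤ h := hj2.trans (Nat.div_le_self h 2)
    rw [abs_mul, abs_pow, Nat.abs_cast, mul_pow, pow_mul]
    gcongr
    exact abs_integral_bKernel_pow_le k hj1 hjh
  have hsum : |∑ j ∈ Icc 1 (h / 2), (j : ℝ) ^ ((h - 1) * k) * ∫ t in (0 : ℝ)..1, bKernel h j t ^ k|
      ≤ h * ((h : ℝ) ^ (h - 1) * 4 ^ h) ^ k := by
    refine (abs_sum_le_sum_abs _ _).trans ((sum_le_sum hterm).trans ?_)
    rw [sum_const, nsmul_eq_mul, Nat.card_Icc]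
    gcongr
    exact_mod_cast (show h / 2 + 1 - 1 ≤ h by omega)
  have hfac : (1 : ℝ) ≤ ((h - 1)! : ℝ) ^ k :=
    one_le_pow₀ (by exact_mod_cast factorial_pos _)
  rw [bConst_eq, abs_mul, abs_mul, abs_two, abs_of_pos (by positivity)]
  calc 1 / ((k ! : ℝ) * ((h - 1)! : ℝ) ^ k) * (2 * |∑ j ∈ Icc 1 (h / 2),
        (j : ℝ) ^ ((h - 1) * k) * ∫ t in (0 : ℝ)..1, bKernel h j t ^ k|)
      ≤ 1 / (k ! : ℝ) * (2 * (h * ((h : ℝ) ^ (h - 1) * 4 ^ h) ^ k)) := by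
        gcongr
        exact le_mul_of_one_le_right (by positivity) hfac
    _ = 2 * h * ((h : ℝ) ^ (h - 1) * 4 ^ h) ^ k / k ! := by ring

lemma summable_mul_pow_of_abs_le_pow_div_factorial {c : ℕ → ℝ} {A C : ℝ}
    (hc : ∀ n, |c n| ≤ A * C ^ n / n !) (y : ℝ) : Summable fun n => c n * y ^ n := by
  refine ((Real.summable_pow_div_factorial (C * |y|)).mul_left A).of_norm_bounded fun n => ?_
  calc ‖c n * y ^ n‖ = |c n| * |y| ^ n := by rw [Real.norm_eq_abs, abs_mul, abs_pow]
    _ ≤ A * C ^ n / n ! * |y| ^ n := by gcongr; exact hc n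
    _ = A * ((C * |y|) ^ n / n !) := by ring

theorem gFun_summable_general (s d : ℕ) (x : ℝ) :
    Summable (fun k : ℕ => (-1 : ℝ) ^ k *
      (bConst (s + d) (k + 1) / ((Nat.factorial s * Nat.factorial d : ℕ) : ℝ) ^ (k + 1)) *
      x ^ ((s + d) * (k + 1))) := by
  have hN : (1 : ℝ) ≤ ((s ! * d ! : ℕ) : ℝ) := by
    exact_mod_cast mul_pos (factorial_pos s) (factorial_pos d)
  set h := s + d
  set N : ℝ := ((s ! * d ! : ℕ) : ℝ)
  have hc : ∀ n, |bConst h n / N ^ n| ≤ 2 * h * ((h : ℝ) ^ (h - 1) * 4 ^ h) ^ n / n ! := fun n =>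
    calc |bConst h n / N ^ n| ≤ |bConst h n| := by
          rw [abs_div, abs_of_pos (pow_pos (zero_lt_one.trans_le hN) n)]
          exact div_le_self (abs_nonneg _) (one_le_pow₀ hN)
      _ ≤ _ := abs_bConst_le h n
  have hsum := (summable_nat_add_iff 1).mpr (summable_mul_pow_of_abs_le_pow_div_factorial hc (x ^ h))
  refine hsum.abs.of_norm_bounded fun k => le_of_eq ?_
  rw [Real.norm_eq_abs, abs_mul, abs_mul, abs_pow, abs_neg, abs_one, one_pow, one_mul, pow_mul,
    abs_mul]

/-- The series `g(x; s, d) = Σ_{k=1}^∞ (−1)^{k−1} (b_{h,k}/(s!d!)^k) x^{hk}` converges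
for every real `x` (here the summation index `k ≥ 1` is written as `k + 1`, `k : ℕ`). -/
theorem gFun_summable (s d : ℕ) (hsd : d ≤ s) (hh : 2 ≤ s + d) (x : ℝ) :
    Summable (fun k : ℕ => (-1 : ℝ) ^ k *
      (bConst (s + d) (k + 1) / ((Nat.factorial s * Nat.factorial d : ℕ) : ℝ) ^ (k + 1)) *
      x ^ ((s + d) * (k + 1))) :=
  gFun_summable_general s d x
end

section
/- Fix integers s ≥ d ≥ 0 with h := s + d ≥ 2. There exists a constant C, depending only on h, such that for every N ≥ 1 and every integer n with −dN ≤ n ≤ sN, writing n' := n + dN and j := ⌊n'/N⌋, one has | R_N(n,s,d) − (1/(h−1)!)·Σ_{i=0}^{j} (−1)^i·C(h,i)·(n' − iN)^{h−1} | ≤ C·N^{h−2}. -/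
/-!
Replacing the last `d` coordinates `a` by `N - a` turns `R_N(n,s,d)` into the number of points
of `{0,…,N}^h` with coordinate sum `x = n + dN`. Inclusion–exclusion over the coordinates that
exceed `N` gives this number exactly as `∑ᵢ (-1)^i C(h,i) C(k + h-1, h-1)` with
`k = x - i(N+1)`, the binomial read as `0` for `k < 0`. For `k ≥ 0`,
`(h-1)! C(k + h-1, h-1) = (k+1)⋯(k+h-1)` has `h-1` factors of size `O(N)`, each within `h` of
`k + i = x - iN`, so it differs from `(x - iN)^(h-1)` by `O(N^(h-2))`; for `k < 0`,
`max(x - iN, 0)^(h-1) ≤ i^(h-1)` is `O(1)`.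
-/

open Finset

open Classical in
/-- `Rcount N n s d` is the number of ordered `(s+d)`-tuples `(a₁, …, a_{s+d})` with
entries in `{0, …, N}` such that `a₁ + ⋯ + a_s − a_{s+1} − ⋯ − a_{s+d} = n`. -/
def Rcount (N : ℕ) (n : ℤ) (s d : ℕ) : ℕ :=
  ((Fintype.piFinset fun _ : Fin (s + d) => Finset.range (N + 1)).filter fun a =>
    (∑ i : Fin (s + d), if (i : ℕ) < s then (a i : ℤ) else -(a i : ℤ)) = n).card

open scoped Nat

def multichooseInt (r : ℕ) (k : ℤ) : ℕ := if 0 ≤ k then r.multichoose k.toNat else 0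

lemma multichooseInt_zero_left (k : ℤ) : multichooseInt 0 k = if k = 0 then 1 else 0 := by
  unfold multichooseInt
  obtain hk | rfl | hk := lt_trichotomy k 0
  · simp [hk.not_ge, hk.ne]
  · simp
  · obtain ⟨m, rfl⟩ : ∃ m : ℕ, k = m + 1 := ⟨k.toNat - 1, by omega⟩
    simp [hk.le, hk.ne']

lemma multichooseInt_succ_left (r : ℕ) (k : ℤ) :
    multichooseInt (r + 1) k = multichooseInt r k + multichooseInt (r + 1) (k - 1) := by
  unfold multichooseInt
  obtain hk | rfl | hk := lt_trichotomy k 0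
  · simp only [if_neg (show ¬ 0 ≤ k by omega), if_neg (show ¬ 0 ≤ k - 1 by omega)]
  · simp
  · obtain ⟨m, rfl⟩ : ∃ m : ℕ, k = m + 1 := ⟨k.toNat - 1, by omega⟩
    simp only [show (0 : ℤ) ≤ m + 1 by omega, if_true, add_sub_cancel_right,
      show ((m : ℤ) + 1).toNat = m + 1 by omega, Int.toNat_natCast]
    exact Nat.multichoose_succ_succ r m

lemma factorial_mul_multichooseInt (r : ℕ) {k : ℤ} (hk : 0 ≤ k) :
    (r ! * multichooseInt (r + 1) k : ℤ) = ∏ t ∈ range r, (k + 1 + t) := by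
  lift k to ℕ using hk
  rw [multichooseInt, if_pos k.cast_nonneg, Int.toNat_natCast, Nat.multichoose_eq,
    show r + 1 + k - 1 = k + r by omega, Nat.choose_symm_add, ← Nat.cast_mul,
    ← Nat.ascFactorial_eq_factorial_mul_choose, Nat.ascFactorial_eq_prod_range]
  push_cast
  rfl

lemma sum_range_multichooseInt (r N : ℕ) (k : ℤ) :
    ∑ a ∈ range (N + 1), (multichooseInt r (k - a) : ℤ) =
      multichooseInt (r + 1) k - multichooseInt (r + 1) (k - (N + 1)) := by
  have telescope := sum_range_sub' (fun a : ℕ => (multichooseInt (r + 1) (k - a) : ℤ)) (N + 1)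
  push_cast at telescope
  rw [sub_zero] at telescope
  rw [← telescope]
  refine sum_congr rfl fun a _ => ?_
  rw [multichooseInt_succ_left r (k - a), sub_sub]
  push_cast
  ring

def boxCount (N h : ℕ) (x : ℤ) : ℕ :=
  #{a ∈ Fintype.piFinset fun _ : Fin h => range (N + 1) | ∑ i, (a i : ℤ) = x}

lemma boxCount_zero_left (N : ℕ) (x : ℤ) : boxCount N 0 x = if x = 0 then 1 else 0 := by
  rw [boxCount]
  split_ifs with hx <;> simp [hx, eq_comm]

lemma boxCount_succ_left (N h : ℕ) (x : ℤ) :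
    boxCount N (h + 1) x = ∑ a ∈ range (N + 1), boxCount N h (x - a) := by
  have hbox := filter_piFinset_eq_map_consEquiv (fun _ : Fin (h + 1) => range (N + 1))
    (fun _ => True)
  rw [filter_true, filter_true] at hbox
  simp only [boxCount, card_filter, hbox, sum_map, sum_product]
  refine sum_congr rfl fun a _ => sum_congr rfl fun b _ => ?_
  simp [Fin.sum_univ_succ, eq_sub_iff_add_eq']

theorem boxCount_eq_sum (N h : ℕ) (x : ℤ) :
    (boxCount N h x : ℤ) = ∑ i ∈ range (h + 1),
      (-1 : ℤ) ^ i * (h.choose i : ℤ) * (multichooseInt h (x - i * (N + 1)) : ℤ) := by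
  induction h generalizing x with
  | zero => simp [boxCount_zero_left, multichooseInt_zero_left]
  | succ h ih =>
    have pascal := sum_choose_succ_mul
      (fun i _ => (-1 : ℤ) ^ i * multichooseInt (h + 1) (x - i * (N + 1))) h
    simp only [mul_left_comm _ ((-1 : ℤ) ^ _)] at pascal
    simp only [mul_assoc]
    rw [show h + 1 + 1 = h + 2 from rfl, pascal, boxCount_succ_left, Nat.cast_sum,
      ← sum_add_distrib]
    simp only [ih]
    rw [sum_comm]
    refine sum_congr rfl fun i _ => ?_
    rw [← mul_sum]
    have hockey := sum_range_multichooseInt h N (x - i * (N + 1))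
    rw [show x - i * (N + 1) - (N + 1) = x - (i + 1) * (N + 1) by ring] at hockey
    simp only [sub_right_comm x _ ((i : ℤ) * (N + 1)), hockey]
    push_cast
    ring

def reflectTail (N s : ℕ) {d : ℕ} (a : Fin (s + d) → ℕ) : Fin (s + d) → ℕ :=
  fun i => if (i : ℕ) < s then a i else N - a i

lemma sum_reflectTail (N s : ℕ) {d : ℕ} {a : Fin (s + d) → ℕ} (ha : ∀ i, a i ≤ N) :
    ∑ i, (reflectTail N s a i : ℤ) =
      (∑ i : Fin (s + d), if (i : ℕ) < s then (a i : ℤ) else -(a i : ℤ)) + d * N := by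
  simp only [reflectTail, Fin.sum_univ_add, Fin.val_castAdd, Fin.val_natAdd, Fin.is_lt,
    if_true, show ∀ j : Fin d, ¬ s + (j : ℕ) < s by omega, if_false, Nat.cast_sub (ha _)]
  simp only [sum_sub_distrib, sum_const, card_univ, Fintype.card_fin, Int.nsmul_eq_mul,
    sum_neg_distrib]
  ring

lemma reflectTail_reflectTail (N s : ℕ) {d : ℕ} {a : Fin (s + d) → ℕ}
    (ha : ∀ i, a i ≤ N) : reflectTail N s (reflectTail N s a) = a := by
  funext i
  have := ha i
  simp only [reflectTail]
  split_ifs <;> omega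

lemma reflectTail_le (N s : ℕ) {d : ℕ} (a : Fin (s + d) → ℕ) (i : Fin (s + d))
    (ha : a i ≤ N) : reflectTail N s a i ≤ N := by
  simp only [reflectTail]
  split_ifs <;> omega

theorem Rcount_eq_boxCount (N : ℕ) (n : ℤ) (s d : ℕ) :
    Rcount N n s d = boxCount N (s + d) (n + d * N) := by
  refine card_nbij' (reflectTail N s) (reflectTail N s) ?_ ?_ ?_ ?_
  all_goals
    intro a ha
    simp only [coe_filter, Set.mem_ofPred_eq, Fintype.mem_piFinset, mem_range,
      Nat.lt_succ_iff] at ha ⊢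
  · refine ⟨fun i => reflectTail_le N s a i (ha.1 i), ?_⟩
    rw [sum_reflectTail N s ha.1, ha.2]
  · refine ⟨fun i => reflectTail_le N s a i (ha.1 i), ?_⟩
    have := sum_reflectTail N s (fun i => reflectTail_le N s a i (ha.1 i))
    rw [reflectTail_reflectTail N s ha.1, ha.2] at this
    linarith
  · exact reflectTail_reflectTail N s ha.1
  · exact reflectTail_reflectTail N s ha.1

lemma abs_prod_range_le (n : ℕ) {b : ℕ → ℝ} {M : ℝ} (hb : ∀ t < n, |b t| ≤ M) :
    |∏ t ∈ range n, b t| ≤ M ^ n := by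
  rw [abs_prod, ← card_range n, ← prod_const, card_range]
  exact prod_le_prod (fun t _ => abs_nonneg _) fun t ht => hb t (mem_range.mp ht)

lemma abs_prod_range_sub_prod_range_le (n : ℕ) {a b : ℕ → ℝ} {M D : ℝ}
    (ha : ∀ t < n, |a t| ≤ M) (hb : ∀ t < n, |b t| ≤ M)
    (hab : ∀ t < n, |a t - b t| ≤ D) :
    |∏ t ∈ range n, a t - ∏ t ∈ range n, b t| ≤ n * D * M ^ (n - 1) := by
  induction n with
  | zero => simp
  | succ n ih =>
    have hM : 0 ≤ M := (abs_nonneg _).trans (ha 0 n.succ_pos)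
    have hD : 0 ≤ D := (abs_nonneg _).trans (hab 0 n.succ_pos)
    have ih := ih (fun t ht => ha t (by omega)) (fun t ht => hb t (by omega))
      (fun t ht => hab t (by omega))
    have hbn := abs_prod_range_le n fun t ht => hb t (by omega)
    rw [prod_range_succ, prod_range_succ, Nat.add_sub_cancel]
    calc |(∏ t ∈ range n, a t) * a n - (∏ t ∈ range n, b t) * b n|
        = |a n * (∏ t ∈ range n, a t - ∏ t ∈ range n, b t)
            + (a n - b n) * ∏ t ∈ range n, b t| := by ring_nf
      _ ≤ M * (n * D * M ^ (n - 1)) + D * M ^ n := by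
        refine (abs_add_le _ _).trans ?_
        rw [abs_mul, abs_mul]
        gcongr
        exacts [ha n n.lt_succ_self, hab n n.lt_succ_self]
      _ = (n + 1 : ℕ) * D * M ^ n := by
        rcases n.eq_zero_or_pos with rfl | hn
        · simp
        · rw [← mul_pow_sub_one hn.ne' M]
          push_cast
          ring

lemma abs_factorial_mul_multichooseInt_sub_pow_le (r m : ℕ) {k : ℤ} (hk : 0 ≤ k) :
    |(r ! * multichooseInt (r + 1) k : ℝ) - ((k : ℝ) + m) ^ r| ≤
      r * (r + m) * (k + r + m) ^ (r - 1) := by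
  have hprod : (r ! * multichooseInt (r + 1) k : ℝ) = ∏ t ∈ range r, ((k : ℝ) + 1 + t) := by
    exact_mod_cast factorial_mul_multichooseInt r hk
  have hkR : (0 : ℝ) ≤ k := by exact_mod_cast hk
  rw [hprod, ← card_range r, ← prod_const, card_range]
  have hmR : (0 : ℝ) ≤ m := m.cast_nonneg
  have hrR : (0 : ℝ) ≤ r := r.cast_nonneg
  refine abs_prod_range_sub_prod_range_le r (fun t ht => ?_) (fun _ _ => ?_) (fun t ht => ?_)
  · have htR : (t : ℝ) + 1 ≤ r := by exact_mod_cast ht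
    rw [abs_of_nonneg (by positivity)]
    linarith
  · rw [abs_of_nonneg (by positivity)]
    linarith
  · have htR : (t : ℝ) + 1 ≤ r := by exact_mod_cast ht
    rw [abs_le]
    constructor <;> linarith [t.cast_nonneg (α := ℝ)]

lemma abs_factorial_mul_multichooseInt_sub_max_pow_le {r N i : ℕ} {x : ℤ} (hN : 1 ≤ N)
    (hi : i ≤ r + 1) (hx : x ≤ (r + 1) * N) :
    |(r ! * multichooseInt (r + 1) (x - i * (N + 1)) : ℝ) - max ((x : ℝ) - i * N) 0 ^ r| ≤
      (2 * (r + 1)) ^ (r + 1) * N ^ (r - 1) := by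
  set k := x - i * (N + 1) with hk_def
  have hxk : (x : ℝ) - i * N = k + i := by rw [hk_def]; push_cast; ring
  have hNR : (1 : ℝ) ≤ N := by exact_mod_cast hN
  have hiR : (i : ℝ) ≤ r + 1 := by exact_mod_cast hi
  have hxR : (x : ℝ) ≤ (r + 1) * N := by exact_mod_cast hx
  have hK : (1 : ℝ) ≤ 2 * (r + 1) := by linarith [r.cast_nonneg (α := ℝ)]
  rw [hxk]
  rcases le_or_gt 0 k with hk | hk
  · have hkR : (0 : ℝ) ≤ k := by exact_mod_cast hk
    rw [max_eq_left (by positivity)]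
    refine (abs_factorial_mul_multichooseInt_sub_pow_le r i hk).trans ?_
    rcases r.eq_zero_or_pos with rfl | hr
    · simp
    have hkri : (k : ℝ) + r + i ≤ 2 * (r + 1) * N := by nlinarith [i.cast_nonneg (α := ℝ)]
    calc (r : ℝ) * (r + i) * (k + r + i) ^ (r - 1)
        ≤ (2 * (r + 1)) ^ 2 * ((2 * (r + 1)) ^ (r - 1) * N ^ (r - 1)) := by
          rw [← mul_pow]
          gcongr
          nlinarith
      _ = (2 * (r + 1)) ^ (r + 1) * N ^ (r - 1) := by
          rw [← mul_assoc, ← pow_add, show 2 + (r - 1) = r + 1 by omega]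
  · have hkR : (k : ℝ) < 0 := by exact_mod_cast hk
    rw [multichooseInt, if_neg hk.not_ge, Nat.cast_zero, mul_zero, zero_sub, abs_neg,
      abs_of_nonneg (by positivity)]
    calc max ((k : ℝ) + i) 0 ^ r ≤ (2 * (r + 1)) ^ r := by
          gcongr
          exact max_le (by linarith) (by positivity)
      _ ≤ (2 * (r + 1)) ^ (r + 1) * 1 := by
          rw [mul_one]
          exact pow_le_pow_right₀ hK r.le_succ
      _ ≤ (2 * (r + 1)) ^ (r + 1) * N ^ (r - 1) := by
          gcongr
          exact one_le_pow₀ hNR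

lemma abs_sum_alternating_choose_mul_le (h : ℕ) {a : ℕ → ℝ} {E : ℝ}
    (ha : ∀ i ≤ h, |a i| ≤ E) :
    |∑ i ∈ range (h + 1), (-1) ^ i * (h.choose i : ℝ) * a i| ≤ 2 ^ h * E := by
  calc |∑ i ∈ range (h + 1), (-1) ^ i * (h.choose i : ℝ) * a i|
      ≤ ∑ i ∈ range (h + 1), (h.choose i : ℝ) * E := by
        refine (abs_sum_le_sum_abs _ _).trans (sum_le_sum fun i hi => ?_)
        rw [abs_mul, abs_mul, abs_pow, abs_neg, abs_one, one_pow, one_mul, Nat.abs_cast]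
        gcongr
        exact ha i (Nat.lt_succ_iff.mp (mem_range.mp hi))
    _ = 2 ^ h * E := by
        rw [← sum_mul]
        exact_mod_cast congrArg (fun m : ℕ => (m : ℝ) * E) (Nat.sum_range_choose h)

lemma sum_range_toNat_ediv_eq_sum_max (c : ℕ → ℝ) {r N h : ℕ} {x : ℤ} (hr : r ≠ 0)
    (hN : 0 < N) (hx₀ : 0 ≤ x) (hx : x ≤ h * N) :
    ∑ i ∈ range ((x / N).toNat + 1), c i * ((x : ℝ) - i * N) ^ r =
      ∑ i ∈ range (h + 1), c i * max ((x : ℝ) - i * N) 0 ^ r := by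
  have hNZ : (0 : ℤ) < N := by exact_mod_cast hN
  have hmem : ∀ i : ℕ, i ∈ range ((x / N).toNat + 1) ↔ (i : ℝ) * N ≤ x := by
    intro i
    rw [mem_range, Nat.lt_succ_iff, Int.le_toNat (Int.ediv_nonneg hx₀ hNZ.le),
      Int.le_ediv_iff_mul_le hNZ]
    exact_mod_cast Iff.rfl
  have hsub : range ((x / N).toNat + 1) ⊆ range (h + 1) := by
    intro i hi
    have hiN : (i : ℤ) * N ≤ h * N := le_trans (by exact_mod_cast (hmem i).mp hi) hx
    have := le_of_mul_le_mul_right hiN hNZ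
    exact mem_range.mpr (by omega)
  rw [← sum_subset hsub fun i _ hi => ?_]
  · exact sum_congr rfl fun i hi => by rw [max_eq_left (sub_nonneg.mpr ((hmem i).mp hi))]
  · rw [max_eq_right (sub_nonpos.mpr (le_of_lt (not_le.mp (mt (hmem i).mpr hi)))),
      zero_pow hr, mul_zero]

theorem abs_boxCount_sub_sum_le {r N : ℕ} {x : ℤ} (hN : 1 ≤ N) (hx : x ≤ (r + 1) * N) :
    |(boxCount N (r + 1) x : ℝ) - (1 / r ! : ℝ) * ∑ i ∈ range (r + 2),
        (-1) ^ i * ((r + 1).choose i : ℝ) * max ((x : ℝ) - i * N) 0 ^ r| ≤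
      2 ^ (r + 1) * (2 * (r + 1)) ^ (r + 1) * N ^ (r - 1) := by
  have hfact : (0 : ℝ) < r ! := by exact_mod_cast r.factorial_pos
  have hexact : (boxCount N (r + 1) x : ℝ) = (1 / r ! : ℝ) * ∑ i ∈ range (r + 2),
      (-1) ^ i * ((r + 1).choose i : ℝ) *
        (r ! * multichooseInt (r + 1) (x - i * (N + 1)) : ℝ) := by
    have hint := congrArg (Int.cast : ℤ → ℝ) (boxCount_eq_sum N (r + 1) x)
    push_cast at hint
    rw [hint, mul_sum]
    refine sum_congr rfl fun i _ => ?_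
    field_simp
  rw [hexact, ← mul_sub, ← sum_sub_distrib, abs_mul, abs_of_pos (by positivity)]
  simp only [← mul_sub]
  have hbound := abs_sum_alternating_choose_mul_le (r + 1) fun i hi =>
    abs_factorial_mul_multichooseInt_sub_max_pow_le (x := x) hN hi hx
  calc (1 / r ! : ℝ) * |_| ≤ 1 * (2 ^ (r + 1) * ((2 * (r + 1)) ^ (r + 1) * N ^ (r - 1))) :=
        mul_le_mul ((div_le_one hfact).mpr (by exact_mod_cast r.factorial_pos)) hbound
          (abs_nonneg _) zero_le_one
    _ = _ := by ring

theorem Rcount_polynomial_approx_general (s d : ℕ) (hh : 2 ≤ s + d) :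
    ∃ C : ℝ, ∀ N : ℕ, 1 ≤ N → ∀ n : ℤ,
      -((d : ℤ) * (N : ℤ)) ≤ n → n ≤ (s : ℤ) * (N : ℤ) →
      |(Rcount N n s d : ℝ) -
          (1 / (Nat.factorial (s + d - 1) : ℝ)) *
            ∑ i ∈ Finset.range (((n + (d : ℤ) * (N : ℤ)) / (N : ℤ)).toNat + 1),
              (-1 : ℝ) ^ i * (Nat.choose (s + d) i : ℝ) *
                (((n : ℝ) + (d : ℝ) * (N : ℝ)) - (i : ℝ) * (N : ℝ)) ^ (s + d - 1)| ≤
        C * (N : ℝ) ^ (s + d - 2) := by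
  obtain ⟨r, hr⟩ : ∃ r, s + d = r + 1 := ⟨s + d - 1, by omega⟩
  refine ⟨2 ^ (r + 1) * (2 * (r + 1)) ^ (r + 1), fun N hN n hn₀ hn₁ => ?_⟩
  set x := n + d * N with hx_def
  have hx₀ : 0 ≤ x := by omega
  have hx : x ≤ (r + 1) * N := by
    rw [hx_def, ← Nat.cast_add_one, ← hr]
    push_cast
    linarith
  have hxR : (n : ℝ) + d * N = x := by rw [hx_def]; push_cast; ring
  rw [hxR, show s + d - 1 = r by omega, show s + d - 2 = r - 1 by omega, hr,
    sum_range_toNat_ediv_eq_sum_max _ (by omega) hN hx₀ hx, Rcount_eq_boxCount, hr]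
  exact abs_boxCount_sub_sum_le hN hx

theorem Rcount_polynomial_approx (s d : ℕ) (hsd : d ≤ s) (hh : 2 ≤ s + d) :
    ∃ C : ℝ, ∀ N : ℕ, 1 ≤ N → ∀ n : ℤ,
      -((d : ℤ) * (N : ℤ)) ≤ n → n ≤ (s : ℤ) * (N : ℤ) →
      |(Rcount N n s d : ℝ) -
          (1 / (Nat.factorial (s + d - 1) : ℝ)) *
            ∑ i ∈ Finset.range (((n + (d : ℤ) * (N : ℤ)) / (N : ℤ)).toNat + 1),
              (-1 : ℝ) ^ i * (Nat.choose (s + d) i : ℝ) *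
                (((n : ℝ) + (d : ℝ) * (N : ℝ)) - (i : ℝ) * (N : ℝ)) ^ (s + d - 1)| ≤
        C * (N : ℝ) ^ (s + d - 2) :=
  Rcount_polynomial_approx_general s d hh
end
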